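/- arXiv:2207.07323 — 6 statements merged into one kernel-verified Lean document; each statement's English description precedes it below -/
import Mathlib

section
/- Let α > 1 and let A and M be finite-valued Young functions, with M differentiable on (0,∞) and satisfying d/dt (M(t)/t) > 0 for all t > 0. Fix λ > 0 and let Φ_λ(s) = s A⁻¹(Ψ_λ(s)), with generalized right-continuous inverse Φ_λ⁻¹(τ) = inf{ s > 0 : Φ_λ(s) > τ }. Then the following are equivalent: (a) there exists δ > 0 with ∫₀^δ s^{−1/α′} A⁻¹(Ψ_λ(s)) ds < ∞; (b) there exists δ′ > 0 with ∫₀^{δ′} Φ_λ⁻¹(τ)^{−1/α′} dτ < ∞. -/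
open MeasureTheory Set Filter
open scoped ENNReal

/-- A finite-valued Young function: convex, vanishing at `0`, nonnegative on `[0,∞)`,
and not identically zero there. -/
structure IsYoung (A : ℝ → ℝ) : Prop where
  zero : A 0 = 0
  nonneg : ∀ t, 0 ≤ t → 0 ≤ A t
  convex : ConvexOn ℝ (Set.Ici 0) A
  nontrivial : ∃ t, 0 < t ∧ 0 < A t

/-- The Young conjugate `Ã(x) = sup { x t − A(t) : t ≥ 0 }`, with values in `[0,∞]`. -/
noncomputable def conjE (A : ℝ → ℝ) (x : ℝ≥0∞) : ℝ≥0∞ :=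
  ⨆ t : {t : ℝ // 0 ≤ t}, (x * ENNReal.ofReal t.1 - ENNReal.ofReal (A t.1))

/-- The generalized right-continuous inverse `F⁻¹(t) = inf { s ≥ 0 : F(s) > t }`. -/
noncomputable def rcInv (F : ℝ → ℝ) (t : ℝ) : ℝ :=
  sInf {s : ℝ | 0 ≤ s ∧ t < F s}

/-- The generalized right-continuous inverse of a Young function, acting on `[0,∞]`:
`A⁻¹(t) = inf { x ≥ 0 : A(x) > t }` (with `inf ∅ = ∞`). -/
noncomputable def einv (A : ℝ → ℝ) (t : ℝ≥0∞) : ℝ≥0∞ :=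
  sInf {x : ℝ≥0∞ | t < ENNReal.ofReal (A x.toReal)}

/-- `Ψ_λ(s) = (1/s) [ ∫₀^s Ã(λ r^{1/α} M⁻¹(1/r)) dr + ∫_s^∞ Ã(λ r^{−1/α′} s M⁻¹(1/s)) dr ]`. -/
noncomputable def Psi (A M : ℝ → ℝ) (a lam s : ℝ) : ℝ≥0∞ :=
  (ENNReal.ofReal s)⁻¹ *
    ((∫⁻ r in Set.Ioc 0 s, conjE A (ENNReal.ofReal (lam * r ^ (1/a) * rcInv M (1/r)))) +
     (∫⁻ r in Set.Ioi s, conjE A (ENNReal.ofReal (lam * r ^ (-((a-1)/a)) * s * rcInv M (1/s)))))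

/-- `Φ_λ(s) = s A⁻¹(Ψ_λ(s))`. -/
noncomputable def Phi (A M : ℝ → ℝ) (a lam s : ℝ) : ℝ≥0∞ :=
  ENNReal.ofReal s * einv A (Psi A M a lam s)

/-- Condition (M): for every `λ > 0` there is `δ > 0` with
`∫₀^δ s^{−1/α′} A⁻¹(Ψ_λ(s)) ds < ∞`. -/
def CondM (A M : ℝ → ℝ) (a : ℝ) : Prop :=
  ∀ lam > (0:ℝ), ∃ δ > (0:ℝ),
    (∫⁻ s in Set.Ioc (0:ℝ) δ,
      ENNReal.ofReal (s ^ (-((a-1)/a))) * einv A (Psi A M a lam s)) < ⊤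

/-- The generalized right-continuous inverse `Φ⁻¹(τ) = inf { s > 0 : Φ(s) > τ }` of an
`[0,∞]`-valued function on `(0,∞)`, with values in `[0,∞]` (`inf ∅ = ∞`). -/
noncomputable def invE (Φ : ℝ → ℝ≥0∞) (τ : ℝ) : ℝ≥0∞ :=
  sInf {x : ℝ≥0∞ | ∃ s : ℝ, 0 < s ∧ x = ENNReal.ofReal s ∧ ENNReal.ofReal τ < Φ s}

/-!
On `(0, ∞)` the integrand of (a) is `s^{-1-1/α′} Φ_λ(s)`, so everything rests on `Φ_λ` being
nondecreasing. This holds because `t M⁻¹(1/t)` is nondecreasing (superadditivity of the convex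
`M`), which makes `s Ψ_λ(s)` nondecreasing, i.e. `Ψ_λ(s₁) ≤ (s₂/s₁) Ψ_λ(s₂)`, while convexity of
`A` gives `A⁻¹(k x) ≤ k A⁻¹(x)` for `k ≥ 1`.

For a nondecreasing `Φ` and `c > 0`, Tonelli gives
`∫₀^δ Φ⁻¹(τ)^{-c} dτ = c ∫₀^∞ s^{-1-c} min(Φ(s), δ) ds`. The right-hand side is finite for some
`δ > 0` iff `∫₀^δ s^{-1-c} Φ(s) ds` is: the tail `s > δ` is always integrable, and finiteness
forces `Φ ≤ δ` near `0`.
-/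

namespace IsYoung

variable {A : ℝ → ℝ}

theorem mul_le_apply_mul (hA : IsYoung A) {k x : ℝ} (hk : 1 ≤ k) (hx : 0 ≤ x) :
    k * A x ≤ A (k * x) := by
  have hk0 : 0 < k := one_pos.trans_le hk
  have h := hA.convex.2 (mem_Ici.2 (mul_nonneg hk0.le hx)) (mem_Ici.2 le_rfl)
    (inv_nonneg.2 hk0.le) (sub_nonneg.2 (inv_le_one_of_one_le₀ hk)) (add_sub_cancel _ _)
  simp only [smul_eq_mul, mul_zero, add_zero, hA.zero, inv_mul_cancel_left₀ hk0.ne'] at h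
  rwa [← div_eq_inv_mul, le_div_iff₀' hk0] at h

theorem exists_lt_apply (hA : IsYoung A) (y : ℝ) : ∃ t, 0 ≤ t ∧ y < A t := by
  obtain ⟨t, ht, hAt⟩ := hA.nontrivial
  set k := max 1 ((y + 1) / A t)
  refine ⟨k * t, by positivity, ?_⟩
  have hk : (y + 1) / A t ≤ k := le_max_right _ _
  rw [div_le_iff₀ hAt] at hk
  linarith [hA.mul_le_apply_mul (le_max_left 1 ((y + 1) / A t)) ht.le]

theorem rcInv_mul_le (hA : IsYoung A) {k : ℝ} (hk : 1 ≤ k) (y : ℝ) :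
    rcInv A (k * y) ≤ k * rcInv A y := by
  have hk0 : 0 < k := one_pos.trans_le hk
  rw [← div_le_iff₀' hk0]
  obtain ⟨t₀, ht₀, hyt₀⟩ := hA.exists_lt_apply y
  refine le_csInf ⟨t₀, ht₀, hyt₀⟩ fun t ⟨ht, hyt⟩ => ?_
  rw [div_le_iff₀' hk0]
  refine csInf_le ⟨0, fun _ hs => hs.1⟩ ⟨mul_nonneg hk0.le ht, ?_⟩
  calc k * y < k * A t := mul_lt_mul_of_pos_left hyt hk0
    _ ≤ A (k * t) := hA.mul_le_apply_mul hk ht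

theorem monotoneOn_mul_rcInv_one_div (hA : IsYoung A) :
    MonotoneOn (fun s => s * rcInv A (1 / s)) (Ioi 0) := by
  intro u (hu : 0 < u) r (hr : 0 < r) hur
  have hk : 1 ≤ r / u := (one_le_div hu).2 hur
  calc u * rcInv A (1 / u) = u * rcInv A (r / u * (1 / r)) := by
        congr 2; field_simp [hr.ne']
    _ ≤ u * (r / u * rcInv A (1 / r)) := by gcongr; exact hA.rcInv_mul_le hk _
    _ = r * rcInv A (1 / r) := by rw [← mul_assoc, mul_div_cancel₀ _ hu.ne']

theorem einv_ofReal_mul_le (hA : IsYoung A) {k : ℝ} (hk : 1 ≤ k) (u : ℝ≥0∞) :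
    einv A (ENNReal.ofReal k * u) ≤ ENNReal.ofReal k * einv A u := by
  have hk0 : ENNReal.ofReal k ≠ 0 := by simp; linarith
  rw [mul_comm (ENNReal.ofReal k) (einv A u),
    ← ENNReal.div_le_iff_le_mul (.inl hk0) (.inl ENNReal.ofReal_ne_top)]
  refine le_sInf fun x (hx : u < _) => ?_
  rw [ENNReal.div_le_iff_le_mul (.inl hk0) (.inl ENNReal.ofReal_ne_top)]
  rcases eq_or_ne x ⊤ with rfl | hxt
  · simp [hk0]
  refine sInf_le (Set.mem_ofPred.2 ?_)
  rw [ENNReal.toReal_mul, ENNReal.toReal_ofReal (by linarith), mul_comm x.toReal]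
  calc ENNReal.ofReal k * u < ENNReal.ofReal k * ENNReal.ofReal (A x.toReal) :=
        by gcongr; exact ENNReal.ofReal_ne_top
    _ = ENNReal.ofReal (k * A x.toReal) := (ENNReal.ofReal_mul (by linarith)).symm
    _ ≤ ENNReal.ofReal (A (k * x.toReal)) :=
        ENNReal.ofReal_le_ofReal (hA.mul_le_apply_mul hk ENNReal.toReal_nonneg)

end IsYoung

theorem conjE_mono (A : ℝ → ℝ) {x y : ℝ≥0∞} (h : x ≤ y) : conjE A x ≤ conjE A y :=
  iSup_mono fun _ => tsub_le_tsub_right (mul_le_mul_left h _) _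

theorem einv_mono (A : ℝ → ℝ) {x y : ℝ≥0∞} (h : x ≤ y) : einv A x ≤ einv A y :=
  sInf_le_sInf fun _ hz => h.trans_lt hz

section Phi

variable {A M : ℝ → ℝ} {a lam : ℝ}

/-- `s Ψ_λ(s)`, for `s > 0`. -/
noncomputable def psiNumerator (A M : ℝ → ℝ) (a lam s : ℝ) : ℝ≥0∞ :=
  (∫⁻ r in Ioc 0 s, conjE A (ENNReal.ofReal (lam * r ^ (1/a) * rcInv M (1/r)))) +
    ∫⁻ r in Ioi s, conjE A (ENNReal.ofReal (lam * r ^ (-((a-1)/a)) * s * rcInv M (1/s)))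

theorem Psi_eq_inv_mul_psiNumerator (s : ℝ) :
    Psi A M a lam s = (ENNReal.ofReal s)⁻¹ * psiNumerator A M a lam s := rfl

theorem monotoneOn_psiNumerator (hM : IsYoung M) (ha : a ≠ 0) (hlam : 0 ≤ lam) :
    MonotoneOn (psiNumerator A M a lam) (Ioi 0) := by
  intro s₁ (hs₁ : 0 < s₁) s₂ (hs₂ : 0 < s₂) hs
  -- Both integrands are `Ã(λ r^{-1/α′} T(t))` with `T(t) = t M⁻¹(1/t)`, taken at `t = r` and at
  -- `t = s` respectively (as `r^{1/α} = r^{-1/α′} r`), and `T` is nondecreasing.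
  have hT := hM.monotoneOn_mul_rcInv_one_div
  have hpow : ∀ r : ℝ, 0 < r → r ^ (1/a) = r ^ (-((a-1)/a)) * r := fun r hr => by
    rw [← Real.rpow_add_one hr.ne']; congr 1; field_simp; ring
  have hmid : ∀ r ∈ Ioc s₁ s₂,
      conjE A (ENNReal.ofReal (lam * r ^ (-((a-1)/a)) * s₁ * rcInv M (1/s₁))) ≤
        conjE A (ENNReal.ofReal (lam * r ^ (1/a) * rcInv M (1/r))) := fun r hr' => by
    have hr : 0 < r := hs₁.trans hr'.1
    rw [hpow r hr, mul_assoc _ s₁, ← mul_assoc lam, mul_assoc _ r]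
    exact conjE_mono A (ENNReal.ofReal_le_ofReal
      (mul_le_mul_of_nonneg_left (hT hs₁ hr hr'.1.le) (by positivity)))
  have htail : ∀ r ∈ Ioi s₂,
      conjE A (ENNReal.ofReal (lam * r ^ (-((a-1)/a)) * s₁ * rcInv M (1/s₁))) ≤
        conjE A (ENNReal.ofReal (lam * r ^ (-((a-1)/a)) * s₂ * rcInv M (1/s₂))) := fun r hr => by
    have hr : 0 < r := hs₂.trans hr
    rw [mul_assoc _ s₁, mul_assoc _ s₂]
    exact conjE_mono A (ENNReal.ofReal_le_ofReal
      (mul_le_mul_of_nonneg_left (hT hs₁ hs₂ hs) (by positivity)))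
  unfold psiNumerator
  rw [← Ioc_union_Ioi_eq_Ioi hs, lintegral_union measurableSet_Ioi (Ioc_disjoint_Ioi le_rfl),
    ← Ioc_union_Ioc_eq_Ioc hs₁.le hs, lintegral_union measurableSet_Ioc
      (Ioc_disjoint_Ioc_of_le le_rfl), add_assoc]
  exact add_le_add le_rfl (add_le_add (setLIntegral_mono' measurableSet_Ioc hmid)
    (setLIntegral_mono' measurableSet_Ioi htail))

theorem Psi_le_ofReal_div_mul_Psi (hM : IsYoung M) (ha : a ≠ 0) (hlam : 0 ≤ lam)
    {s₁ s₂ : ℝ} (hs₁ : 0 < s₁) (hs : s₁ ≤ s₂) :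
    Psi A M a lam s₁ ≤ ENNReal.ofReal (s₂ / s₁) * Psi A M a lam s₂ := by
  have hs₂ : 0 < s₂ := hs₁.trans_le hs
  have hratio : ENNReal.ofReal (s₂ / s₁) * (ENNReal.ofReal s₂)⁻¹ = (ENNReal.ofReal s₁)⁻¹ := by
    rw [ENNReal.ofReal_div_of_pos hs₁, div_eq_mul_inv, mul_right_comm,
      ENNReal.mul_inv_cancel (by simpa using hs₂) ENNReal.ofReal_ne_top, one_mul]
  rw [Psi_eq_inv_mul_psiNumerator, Psi_eq_inv_mul_psiNumerator, ← mul_assoc, hratio]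
  gcongr
  exact monotoneOn_psiNumerator hM ha hlam hs₁ hs₂ hs

theorem monotone_Phi (hA : IsYoung A) (hM : IsYoung M) (ha : a ≠ 0) (hlam : 0 ≤ lam) :
    Monotone (Phi A M a lam) := by
  intro s₁ s₂ hs
  rcases le_or_gt s₁ 0 with hs₁ | hs₁
  · simp [Phi, ENNReal.ofReal_eq_zero.2 hs₁]
  unfold Phi
  calc ENNReal.ofReal s₁ * einv A (Psi A M a lam s₁)
      ≤ ENNReal.ofReal s₁ * einv A (ENNReal.ofReal (s₂ / s₁) * Psi A M a lam s₂) := by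
        gcongr
        exact einv_mono A (Psi_le_ofReal_div_mul_Psi hM ha hlam hs₁ hs)
    _ ≤ ENNReal.ofReal s₁ * (ENNReal.ofReal (s₂ / s₁) * einv A (Psi A M a lam s₂)) := by
        gcongr
        exact hA.einv_ofReal_mul_le ((one_le_div hs₁).2 hs) _
    _ = ENNReal.ofReal s₂ * einv A (Psi A M a lam s₂) := by
        rw [← mul_assoc, ← ENNReal.ofReal_mul hs₁.le, mul_div_cancel₀ _ hs₁.ne']

end Phi

section LayerCake

variable {Φ : ℝ → ℝ≥0∞} {c : ℝ}

theorem invE_le_ofReal {τ s : ℝ} (hs : 0 < s) (h : ENNReal.ofReal τ < Φ s) :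
    invE Φ τ ≤ ENNReal.ofReal s :=
  sInf_le ⟨s, hs, rfl, h⟩

theorem ofReal_lt_of_invE_lt (hΦ : Monotone Φ) {τ s : ℝ} (h : invE Φ τ < ENNReal.ofReal s) :
    ENNReal.ofReal τ < Φ s := by
  obtain ⟨_, ⟨s', _, rfl, hτs'⟩, hs's⟩ := sInf_lt_iff.1 h
  exact hτs'.trans_le (hΦ ((ENNReal.ofReal_lt_ofReal_iff'.1 hs's).1.le))

theorem lintegral_Ioi_rpow_neg_one_sub (hc : 0 < c) {w : ℝ} (hw : 0 ≤ w) :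
    ∫⁻ s in Ioi w, ENNReal.ofReal (s ^ (-1 - c)) =
      ENNReal.ofReal c⁻¹ * ENNReal.ofReal w ^ (-c) := by
  have hexp : -1 - c < -1 := by linarith
  rcases hw.eq_or_lt with rfl | hw
  · rw [ENNReal.ofReal_zero, ENNReal.zero_rpow_of_neg (neg_lt_zero.2 hc),
      ENNReal.mul_top (by simpa using hc), ← not_ne_iff,
      lintegral_ofReal_ne_top_iff_integrable (by fun_prop) ?_]
    · exact not_integrableOn_Ioi_rpow _
    · filter_upwards [ae_restrict_mem measurableSet_Ioi] with s hs
      exact Real.rpow_nonneg (le_of_lt hs) _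
  · rw [← ofReal_integral_eq_lintegral_ofReal (integrableOn_Ioi_rpow_of_lt hexp hw) ?_,
      integral_Ioi_rpow_of_lt hexp hw, ENNReal.ofReal_rpow_of_pos hw,
      ← ENNReal.ofReal_mul (by positivity)]
    · congr 1
      rw [show -1 - c + 1 = -c by ring]
      field_simp
    · filter_upwards [ae_restrict_mem measurableSet_Ioi] with s hs
      exact Real.rpow_nonneg (hw.trans hs).le _

theorem setOf_lt_inter_Ioi_ae_eq (hΦ : Monotone Φ) (τ : ℝ) :
    ({s | ENNReal.ofReal τ < Φ s} ∩ Ioi 0 : Set ℝ) =ᵐ[volume]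
      {s : ℝ | invE Φ τ < ENNReal.ofReal s} := by
  have hsub : {s : ℝ | invE Φ τ < ENNReal.ofReal s} ⊆ {s | ENNReal.ofReal τ < Φ s} ∩ Ioi 0 :=
    fun s hs => ⟨ofReal_lt_of_invE_lt hΦ hs, ENNReal.ofReal_pos.1 (zero_le.trans_lt hs)⟩
  have hdiff : ({s | ENNReal.ofReal τ < Φ s} ∩ Ioi 0) \ {s : ℝ | invE Φ τ < ENNReal.ofReal s} ⊆
      {s | 0 < s ∧ ENNReal.ofReal s = invE Φ τ} :=
    fun s ⟨⟨hτ, hs⟩, hnot⟩ => ⟨hs, le_antisymm (not_lt.1 hnot) (invE_le_ofReal hs hτ)⟩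
  have hnull : volume {s : ℝ | 0 < s ∧ ENNReal.ofReal s = invE Φ τ} = 0 :=
    Set.Subsingleton.measure_zero (fun s (⟨hs, hse⟩ : 0 < s ∧ _) t (⟨ht, hte⟩ : 0 < t ∧ _) =>
      (ENNReal.ofReal_eq_ofReal_iff hs.le ht.le).1 (hse.trans hte.symm)) _
  exact ae_eq_set.2 ⟨measure_mono_null hdiff hnull, by rw [sdiff_eq_empty.2 hsub, measure_empty]⟩

theorem lintegral_setOf_lt_rpow_neg_one_sub (hΦ : Monotone Φ) (hc : 0 < c) (τ : ℝ) :
    ∫⁻ s in {s | ENNReal.ofReal τ < Φ s} ∩ Ioi 0, ENNReal.ofReal (s ^ (-1 - c)) =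
      ENNReal.ofReal c⁻¹ * invE Φ τ ^ (-c) := by
  rw [setLIntegral_congr (setOf_lt_inter_Ioi_ae_eq hΦ τ)]
  rcases eq_or_ne (invE Φ τ) ⊤ with htop | hfin
  · simp [htop, ENNReal.top_rpow_of_neg (neg_lt_zero.2 hc)]
  · have hIoi : {s : ℝ | invE Φ τ < ENNReal.ofReal s} = Ioi (invE Φ τ).toReal :=
      ext fun s => ENNReal.lt_ofReal_iff_toReal_lt hfin
    rw [hIoi, lintegral_Ioi_rpow_neg_one_sub hc ENNReal.toReal_nonneg, ENNReal.ofReal_toReal hfin]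

theorem volume_setOf_ofReal_lt_inter_Ioc (x : ℝ≥0∞) (δ : ℝ) :
    volume ({τ | ENNReal.ofReal τ < x} ∩ Ioc 0 δ) = min x (ENNReal.ofReal δ) := by
  rcases le_or_gt x (ENNReal.ofReal δ) with hx | hx
  · have hfin : x ≠ ⊤ := ne_top_of_le_ne_top ENNReal.ofReal_ne_top hx
    have hset : {τ | ENNReal.ofReal τ < x} ∩ Ioc 0 δ = Ioo 0 x.toReal := by
      ext τ
      refine ⟨fun ⟨hτx, hτ, _⟩ => ⟨hτ, (ENNReal.ofReal_lt_iff_lt_toReal hτ.le hfin).1 hτx⟩,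
        fun ⟨hτ, hτx⟩ => ?_⟩
      have hτx : ENNReal.ofReal τ < x := (ENNReal.ofReal_lt_iff_lt_toReal hτ.le hfin).2 hτx
      exact ⟨hτx, hτ, (ENNReal.ofReal_lt_ofReal_iff'.1 (hτx.trans_le hx)).1.le⟩
    rw [hset, Real.volume_Ioo, sub_zero, ENNReal.ofReal_toReal hfin, min_eq_left hx]
  · have hset : {τ | ENNReal.ofReal τ < x} ∩ Ioc 0 δ = Ioc 0 δ :=
      inter_eq_right.2 fun τ hτ => (ENNReal.ofReal_le_ofReal hτ.2).trans_lt hx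
    rw [hset, Real.volume_Ioc, sub_zero, min_eq_right hx.le]

-- Tonelli for the kernel `s^{-1-c} 1{τ < Φ(s)}`: integrating in `s > 0` gives `c⁻¹ Φ⁻¹(τ)^{-c}`,
-- integrating in `τ ∈ (0, δ]` gives `min (Φ s) δ`.
theorem lintegral_Ioc_invE_rpow (hΦ : Monotone Φ) (hc : 0 < c) (δ : ℝ) :
    ∫⁻ τ in Ioc 0 δ, invE Φ τ ^ (-c) = ENNReal.ofReal c *
      ∫⁻ s in Ioi 0, ENNReal.ofReal (s ^ (-1 - c)) * min (Φ s) (ENNReal.ofReal δ) := by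
  set E : Set (ℝ × ℝ) := {p | ENNReal.ofReal p.1 < Φ p.2}
  have hE : MeasurableSet E := measurableSet_lt (ENNReal.measurable_ofReal.comp measurable_fst)
    (hΦ.measurable.comp measurable_snd)
  set K : ℝ → ℝ → ℝ≥0∞ := fun τ s =>
    E.indicator (fun p => ENNReal.ofReal (p.2 ^ (-1 - c))) (τ, s)
  have hK : Measurable (Function.uncurry K) :=
    (ENNReal.measurable_ofReal.comp (measurable_snd.pow_const _)).indicator hE
  have hτ : ∀ τ, ∫⁻ s in Ioi 0, K τ s = ENNReal.ofReal c⁻¹ * invE Φ τ ^ (-c) := fun τ => by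
    rw [← lintegral_setOf_lt_rpow_neg_one_sub hΦ hc τ, ← setLIntegral_indicator
      (measurableSet_lt measurable_const hΦ.measurable)]
    rfl
  have hs : ∀ s, ∫⁻ τ in Ioc 0 δ, K τ s =
      ENNReal.ofReal (s ^ (-1 - c)) * min (Φ s) (ENNReal.ofReal δ) := fun s => by
    rw [← volume_setOf_ofReal_lt_inter_Ioc, ← setLIntegral_const, ← setLIntegral_indicator
      (measurableSet_lt ENNReal.measurable_ofReal measurable_const)]
    rfl
  calc ∫⁻ τ in Ioc 0 δ, invE Φ τ ^ (-c)
        = ∫⁻ τ in Ioc 0 δ, ENNReal.ofReal c * ∫⁻ s in Ioi 0, K τ s := by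
        refine lintegral_congr fun τ => ?_
        rw [hτ, ← mul_assoc, ← ENNReal.ofReal_mul hc.le, mul_inv_cancel₀ hc.ne',
          ENNReal.ofReal_one, one_mul]
    _ = ENNReal.ofReal c * ∫⁻ s in Ioi 0, ∫⁻ τ in Ioc 0 δ, K τ s := by
        rw [lintegral_const_mul' _ _ ENNReal.ofReal_ne_top,
          lintegral_lintegral_swap hK.aemeasurable]
    _ = _ := by simp_rw [hs]

theorem exists_lintegral_Ioc_rpow_mul_lt_top_iff (hΦ : Monotone Φ) (hc : 0 < c) :
    (∃ δ > 0, ∫⁻ s in Ioc 0 δ, ENNReal.ofReal (s ^ (-1 - c)) * Φ s < ⊤) ↔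
      ∃ δ > 0,
        ∫⁻ s in Ioi 0, ENNReal.ofReal (s ^ (-1 - c)) * min (Φ s) (ENNReal.ofReal δ) < ⊤ := by
  constructor
  · rintro ⟨δ, hδ, hfin⟩
    refine ⟨1, one_pos, ?_⟩
    rw [← Ioc_union_Ioi_eq_Ioi hδ.le, lintegral_union measurableSet_Ioi (Ioc_disjoint_Ioi le_rfl)]
    refine ENNReal.add_lt_top.2 ⟨?_, ?_⟩
    · refine lt_of_le_of_lt (setLIntegral_mono' measurableSet_Ioc fun s _ => ?_) hfin
      gcongr
      exact min_le_left _ _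
    · calc _ ≤ ∫⁻ s in Ioi δ, ENNReal.ofReal (s ^ (-1 - c)) :=
            setLIntegral_mono' measurableSet_Ioi fun s _ =>
              mul_le_of_le_one_right' (by simp)
        _ < ⊤ := by
            rw [lintegral_Ioi_rpow_neg_one_sub hc hδ.le, ENNReal.ofReal_rpow_of_pos hδ,
              ← ENNReal.ofReal_mul (by positivity)]
            exact ENNReal.ofReal_lt_top
  · rintro ⟨δ, hδ, hfin⟩
    -- If `Φ > δ` on all of `(0,∞)`, the integrand is `δ s^{-1-c}`, which is not integrable at `0`.
    obtain ⟨s₀, hs₀, hΦs₀⟩ : ∃ s₀ > 0, Φ s₀ ≤ ENNReal.ofReal δ := by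
      by_contra! h
      refine hfin.ne ?_
      rw [setLIntegral_congr_fun measurableSet_Ioi fun s hs => by rw [min_eq_right (h s hs).le],
        lintegral_mul_const' _ _ ENNReal.ofReal_ne_top, lintegral_Ioi_rpow_neg_one_sub hc le_rfl,
        ENNReal.ofReal_zero, ENNReal.zero_rpow_of_neg (neg_lt_zero.2 hc),
        ENNReal.mul_top (by simpa using hc), ENNReal.top_mul (by simpa using hδ)]
    refine ⟨s₀, hs₀, lt_of_le_of_lt ?_ hfin⟩
    calc ∫⁻ s in Ioc 0 s₀, ENNReal.ofReal (s ^ (-1 - c)) * Φ s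
        = ∫⁻ s in Ioc 0 s₀, ENNReal.ofReal (s ^ (-1 - c)) * min (Φ s) (ENNReal.ofReal δ) :=
          setLIntegral_congr_fun measurableSet_Ioc fun s hs => by
            rw [min_eq_left ((hΦ hs.2).trans hΦs₀)]
      _ ≤ _ := lintegral_mono_set Ioc_subset_Ioi_self

theorem exists_lintegral_Ioc_rpow_mul_lt_top_iff_invE (hΦ : Monotone Φ) (hc : 0 < c) :
    (∃ δ > 0, ∫⁻ s in Ioc 0 δ, ENNReal.ofReal (s ^ (-1 - c)) * Φ s < ⊤) ↔
      ∃ δ > 0, ∫⁻ τ in Ioc 0 δ, invE Φ τ ^ (-c) < ⊤ := by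
  rw [exists_lintegral_Ioc_rpow_mul_lt_top_iff hΦ hc]
  refine exists_congr fun δ => and_congr_right fun _ => ?_
  rw [lintegral_Ioc_invE_rpow hΦ hc, lt_top_iff_ne_top, lt_top_iff_ne_top, Ne, Ne,
    ENNReal.mul_eq_top]
  simp [hc]

end LayerCake

theorem condM_iff_inv_integrable_general
    (a : ℝ) (ha : 1 < a) (A M : ℝ → ℝ) (hA : IsYoung A) (hM : IsYoung M)
    (lam : ℝ) (hlam : 0 < lam) :
    (∃ δ > (0:ℝ),
      (∫⁻ s in Set.Ioc (0:ℝ) δ,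
        ENNReal.ofReal (s ^ (-((a-1)/a))) * einv A (Psi A M a lam s)) < ⊤) ↔
    (∃ δ' > (0:ℝ),
      (∫⁻ τ in Set.Ioc (0:ℝ) δ',
        (invE (Phi A M a lam) τ) ^ (-((a-1)/a))) < ⊤) := by
  have hc : 0 < (a - 1) / a := div_pos (by linarith) (by linarith)
  have hΦ := monotone_Phi hA hM (by positivity) hlam.le
  rw [← exists_lintegral_Ioc_rpow_mul_lt_top_iff_invE hΦ hc]
  refine exists_congr fun δ => and_congr_right fun _ => ?_
  have hintegrand : EqOn
      (fun s => ENNReal.ofReal (s ^ (-((a-1)/a))) * einv A (Psi A M a lam s))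
      (fun s => ENNReal.ofReal (s ^ (-1 - (a-1)/a)) * Phi A M a lam s) (Ioc 0 δ) := fun s hs => by
    dsimp only
    rw [Phi, ← mul_assoc, ← ENNReal.ofReal_mul (Real.rpow_nonneg hs.1.le _),
      ← Real.rpow_add_one hs.1.ne']
    congr 3
    ring
  rw [setLIntegral_congr_fun measurableSet_Ioc hintegrand]

theorem condM_iff_inv_integrable
    (a : ℝ) (ha : 1 < a) (A M : ℝ → ℝ) (hA : IsYoung A) (hM : IsYoung M)
    (hMdiff : ∀ t > (0:ℝ), DifferentiableAt ℝ M t)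
    (hMratio : ∀ t > (0:ℝ), 0 < deriv (fun u => M u / u) t)
    (lam : ℝ) (hlam : 0 < lam) :
    (∃ δ > (0:ℝ),
      (∫⁻ s in Set.Ioc (0:ℝ) δ,
        ENNReal.ofReal (s ^ (-((a-1)/a))) * einv A (Psi A M a lam s)) < ⊤) ↔
    (∃ δ' > (0:ℝ),
      (∫⁻ τ in Set.Ioc (0:ℝ) δ',
        (invE (Phi A M a lam) τ) ^ (-((a-1)/a))) < ⊤) :=
  condM_iff_inv_integrable_general a ha A M hA hM lam hlam
end

section
/- Let β ∈ (0,1) and let Φ : (0,∞) → [0,∞) be nondecreasing with lim_{s→0⁺} Φ(s) = 0. Define Φ⁻¹(τ) = sup{ s > 0 : Φ(s) ≤ τ } for τ > 0 (with the conventions sup ∅ = 0 and values in [0,∞], and x^{−β} = 0 when x = ∞). Then ∫₀^∞ Φ⁻¹(τ)^{−β} dτ = β ∫₀^∞ s^{−β−1} Φ(s) ds, both sides possibly being infinite. -/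
open MeasureTheory Set Filter
open scoped ENNReal

/-- The generalized inverse `Φ⁻¹(τ) = sup { s > 0 : Φ(s) ≤ τ }`, with values in `[0,∞]`
and the convention `sup ∅ = 0`. -/
noncomputable def supInv (Φ : ℝ → ℝ) (τ : ℝ) : ℝ≥0∞ :=
  sSup {x : ℝ≥0∞ | ∃ s : ℝ, 0 < s ∧ x = ENNReal.ofReal s ∧ Φ s ≤ τ}

theorem aux_Ioi (β : ℝ) (hβ0 : 0 < β) (a : ℝ) (ha : 0 < a) :
    ∫⁻ s in Set.Ioi a, ENNReal.ofReal (β * s ^ (-β - 1)) = ENNReal.ofReal (a ^ (-β)) := by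
  have hlt : (-β - 1 : ℝ) < -1 := by linarith
  have hint : IntegrableOn (fun s : ℝ => β * s ^ (-β - 1)) (Set.Ioi a) :=
    (integrableOn_Ioi_rpow_of_lt hlt ha).const_mul β
  rw [← MeasureTheory.ofReal_integral_eq_lintegral_ofReal hint ?_]
  · congr 1
    rw [MeasureTheory.integral_const_mul, integral_Ioi_rpow_of_lt hlt ha]
    have : -β - 1 + 1 = -β := by ring
    rw [this]
    field_simp
  · filter_upwards [ae_restrict_mem measurableSet_Ioi] with s hs
    exact mul_nonneg hβ0.le (Real.rpow_nonneg (ha.trans hs).le _)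

theorem aux_div (β : ℝ) (hβ0 : 0 < β) :
    ∫⁻ s in Set.Ioi (0:ℝ), ENNReal.ofReal (β * s ^ (-β - 1)) = ⊤ := by
  apply ENNReal.eq_top_of_forall_nnreal_le
  intro r
  set a : ℝ := (max (r:ℝ) 1) ^ (-(1/β)) with ha_def
  have hmax : (0:ℝ) < max (r:ℝ) 1 := lt_of_lt_of_le one_pos (le_max_right _ _)
  have ha : 0 < a := Real.rpow_pos_of_pos hmax _
  have hval : a ^ (-β) = max (r:ℝ) 1 := by
    rw [ha_def, ← Real.rpow_mul hmax.le, show (-(1/β)) * (-β) = 1 by field_simp,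
      Real.rpow_one]
  have hr : (r : ℝ≥0∞) ≤ ENNReal.ofReal (a ^ (-β)) := by
    rw [hval, ENNReal.le_ofReal_iff_toReal_le (by simp) hmax.le]
    simp [le_max_left]
  calc (r : ℝ≥0∞) ≤ ENNReal.ofReal (a ^ (-β)) := hr
    _ = ∫⁻ s in Set.Ioi a, ENNReal.ofReal (β * s ^ (-β - 1)) := (aux_Ioi β hβ0 a ha).symm
    _ ≤ _ := lintegral_mono_set (Set.Ioi_subset_Ioi ha.le)

/-- Lemma A -/
theorem aux_layer (β : ℝ) (hβ0 : 0 < β) (x : ℝ≥0∞) :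
    ∫⁻ s in Set.Ioi (0:ℝ),
      (if x ≤ ENNReal.ofReal s then ENNReal.ofReal (β * s ^ (-β - 1)) else 0)
      = x ^ (-β) := by
  rcases eq_or_ne x ⊤ with rfl | hx_top
  · rw [ENNReal.top_rpow_of_neg (by linarith)]
    rw [← lintegral_zero (μ := volume.restrict (Set.Ioi (0:ℝ)))]
    apply lintegral_congr
    intro s
    simp [(ENNReal.ofReal_lt_top).not_ge]
  rcases eq_or_ne x 0 with rfl | hx0
  · rw [ENNReal.zero_rpow_of_neg (by linarith)]
    rw [← aux_div β hβ0]
    apply lintegral_congr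
    intro s
    simp
  · set a : ℝ := x.toReal with ha_def
    have ha : 0 < a := ENNReal.toReal_pos hx0 hx_top
    have hxa : x = ENNReal.ofReal a := (ENNReal.ofReal_toReal hx_top).symm
    have hset : ∀ s : ℝ, (x ≤ ENNReal.ofReal s ↔ a ≤ s) := by
      intro s
      rw [hxa]
      constructor
      · intro h
        by_contra hc
        push_neg at hc
        exact absurd h (not_le.mpr ((ENNReal.ofReal_lt_ofReal_iff ha).mpr hc))
      · intro h; exact ENNReal.ofReal_le_ofReal h
    calc ∫⁻ s in Set.Ioi (0:ℝ),
          (if x ≤ ENNReal.ofReal s then ENNReal.ofReal (β * s ^ (-β - 1)) else 0)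
        = ∫⁻ s in Set.Ioi (0:ℝ),
          (Set.Ici a).indicator (fun s => ENNReal.ofReal (β * s ^ (-β - 1))) s := by
          apply lintegral_congr; intro s
          by_cases h : a ≤ s <;> simp [Set.indicator, hset s, h]
      _ = ∫⁻ s in Set.Ioi (0:ℝ) ∩ Set.Ici a, ENNReal.ofReal (β * s ^ (-β - 1)) := by
          rw [lintegral_indicator measurableSet_Ici, Measure.restrict_restrict measurableSet_Ici]
          rw [Set.inter_comm]
      _ = ∫⁻ s in Set.Ici a, ENNReal.ofReal (β * s ^ (-β - 1)) := by
          have hinter : Set.Ioi (0:ℝ) ∩ Set.Ici a = Set.Ici a :=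
            Set.inter_eq_right.mpr (fun s hs => lt_of_lt_of_le ha hs)
          rw [hinter]
      _ = ∫⁻ s in Set.Ioi a, ENNReal.ofReal (β * s ^ (-β - 1)) := by
          rw [MeasureTheory.restrict_Ioi_eq_restrict_Ici]
      _ = ENNReal.ofReal (a ^ (-β)) := aux_Ioi β hβ0 a ha
      _ = x ^ (-β) := by rw [hxa, ← ENNReal.ofReal_rpow_of_pos ha]

/-- For a nondecreasing `Φ : (0,∞) → [0,∞)` with `Φ(s) → 0` as `s → 0⁺`, and `β ∈ (0,1)`,
one has `∫₀^∞ Φ⁻¹(τ)^{−β} dτ = β ∫₀^∞ s^{−β−1} Φ(s) ds`, both sides possibly infinite.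
(Here `x^{−β} = 0` when `x = ∞`, as in `ENNReal.rpow`.) -/
theorem fubini_inverse_identity
    (β : ℝ) (hβ0 : 0 < β) (hβ1 : β < 1)
    (Φ : ℝ → ℝ) (hmono : MonotoneOn Φ (Set.Ioi 0))
    (hnonneg : ∀ s > (0:ℝ), 0 ≤ Φ s)
    (hlim : Filter.Tendsto Φ (nhdsWithin 0 (Set.Ioi 0)) (nhds 0)) :
    (∫⁻ τ in Set.Ioi (0:ℝ), (supInv Φ τ) ^ (-β)) =
      ENNReal.ofReal β * ∫⁻ s in Set.Ioi (0:ℝ), ENNReal.ofReal (s ^ (-β - 1) * Φ s) := by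
  set g : ℝ → ℝ≥0∞ := supInv Φ with hg_def
  have hgmono : Monotone g := by
    intro τ₁ τ₂ h
    apply sSup_le_sSup
    rintro x ⟨s, hs, rfl, hΦ⟩
    exact ⟨s, hs, rfl, hΦ.trans h⟩
  have hgmeas : Measurable g := hgmono.measurable
  -- the monotone extension of Φ to all of ℝ
  set Ψ : ℝ → ℝ := fun s => if s ≤ 0 then 0 else Φ s with hΨ_def
  have hΨmono : Monotone Ψ := by
    intro s t hst
    by_cases hs : s ≤ 0 <;> by_cases ht : t ≤ 0 <;>
      simp only [hΨ_def, hs, ht, if_true, if_false, le_refl]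
    · exact hnonneg t (not_le.mp ht)
    · exact absurd (hst.trans ht) hs
    · exact hmono (not_le.mp hs) (not_le.mp ht) hst
  -- the key measure computation
  have hTmeas : ∀ s : ℝ, MeasurableSet {τ : ℝ | g τ ≤ ENNReal.ofReal s} := by
    intro s
    exact measurableSet_le hgmeas measurable_const
  have hkey : ∀ s : ℝ, 0 < s → ContinuousAt Ψ s →
      volume ({τ : ℝ | g τ ≤ ENNReal.ofReal s} ∩ Set.Ioi 0) = ENNReal.ofReal (Φ s) := by
    intro s hs hcont
    apply le_antisymm
    · -- upper bound: set ⊆ Ioc 0 (Φ s)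
      have hsub : {τ : ℝ | g τ ≤ ENNReal.ofReal s} ∩ Set.Ioi 0 ⊆ Set.Ioc 0 (Φ s) := by
        rintro τ ⟨hτg, hτ0⟩
        refine ⟨hτ0, ?_⟩
        by_contra hc
        push_neg at hc
        have hΨs : Ψ s = Φ s := by simp [hΨ_def, not_le.mpr hs]
        have htend : Filter.Tendsto Ψ (nhdsWithin s (Set.Ioi s)) (nhds (Φ s)) := by
          rw [← hΨs]
          exact hcont.continuousWithinAt.tendsto
        have hev : ∀ᶠ t in nhdsWithin s (Set.Ioi s), Ψ t < τ :=
          htend.eventually_lt_const hc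
        obtain ⟨t, htlt, hts⟩ := (hev.and (eventually_mem_nhdsWithin)).exists
        have ht0 : 0 < t := hs.trans hts
        have hΨt : Ψ t = Φ t := by simp [hΨ_def, not_le.mpr ht0]
        have hmem : ENNReal.ofReal t ≤ g τ :=
          le_sSup ⟨t, ht0, rfl, by rw [← hΨt]; exact htlt.le⟩
        have : ENNReal.ofReal t ≤ ENNReal.ofReal s := hmem.trans hτg
        have := (ENNReal.ofReal_le_ofReal_iff hs.le).mp this
        exact absurd this (not_le.mpr hts)
      calc volume ({τ : ℝ | g τ ≤ ENNReal.ofReal s} ∩ Set.Ioi 0)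
          ≤ volume (Set.Ioc 0 (Φ s)) := measure_mono hsub
        _ = ENNReal.ofReal (Φ s) := by rw [Real.volume_Ioc, sub_zero]
    · -- lower bound: Ioo 0 (Φ s) ⊆ set
      have hsub : Set.Ioo 0 (Φ s) ⊆ {τ : ℝ | g τ ≤ ENNReal.ofReal s} ∩ Set.Ioi 0 := by
        rintro τ ⟨hτ0, hτΦ⟩
        refine ⟨?_, hτ0⟩
        show g τ ≤ ENNReal.ofReal s
        apply sSup_le
        rintro x ⟨t, ht0, rfl, hΦt⟩
        apply ENNReal.ofReal_le_ofReal
        by_contra hc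
        push_neg at hc
        exact absurd (hΦt.trans_lt hτΦ) (not_lt.mpr (hmono hs (hs.trans hc) hc.le))
      calc ENNReal.ofReal (Φ s) = volume (Set.Ioo 0 (Φ s)) := by
            rw [Real.volume_Ioo, sub_zero]
        _ ≤ _ := measure_mono hsub
  -- the double integral
  set F : ℝ → ℝ → ℝ≥0∞ := fun τ s =>
    if g τ ≤ ENNReal.ofReal s then ENNReal.ofReal (β * s ^ (-β - 1)) else 0 with hF_def
  have hFmeas : Measurable (Function.uncurry F) := by
    apply Measurable.ite
    · exact measurableSet_le (hgmeas.comp measurable_fst)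
        (ENNReal.measurable_ofReal.comp measurable_snd)
    · apply ENNReal.measurable_ofReal.comp
      have h1 : Measurable (fun t : ℝ => β * t ^ (-β - 1)) := by measurability
      exact h1.comp measurable_snd
    · exact measurable_const
  have hae_cont : ∀ᵐ s ∂(volume : Measure ℝ), ContinuousAt Ψ s := by
    have h0 : volume {x : ℝ | ¬ContinuousAt Ψ x} = 0 :=
      (hΨmono.countable_not_continuousAt).measure_zero volume
    exact ae_iff.mpr h0
  have h1 : ∀ τ : ℝ, ∫⁻ s in Set.Ioi (0:ℝ), F τ s = (g τ) ^ (-β) := fun τ =>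
    aux_layer β hβ0 (g τ)
  calc ∫⁻ τ in Set.Ioi (0:ℝ), (g τ) ^ (-β)
      = ∫⁻ τ in Set.Ioi (0:ℝ), ∫⁻ s in Set.Ioi (0:ℝ), F τ s :=
        (lintegral_congr fun τ => (h1 τ).symm)
    _ = ∫⁻ s in Set.Ioi (0:ℝ), ∫⁻ τ in Set.Ioi (0:ℝ), F τ s :=
        lintegral_lintegral_swap hFmeas.aemeasurable
    _ = ∫⁻ s in Set.Ioi (0:ℝ), ENNReal.ofReal (β * s ^ (-β - 1)) *
          volume ({τ : ℝ | g τ ≤ ENNReal.ofReal s} ∩ Set.Ioi 0) := by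
        apply lintegral_congr
        intro s
        have hind : ∀ τ : ℝ, F τ s =
            ({τ : ℝ | g τ ≤ ENNReal.ofReal s}).indicator
              (fun _ => ENNReal.ofReal (β * s ^ (-β - 1))) τ := by
          intro τ
          by_cases h : g τ ≤ ENNReal.ofReal s <;> simp [hF_def, Set.indicator, h]
        rw [lintegral_congr hind, lintegral_indicator_const (hTmeas s),
          Measure.restrict_apply (hTmeas s)]
    _ = ∫⁻ s in Set.Ioi (0:ℝ), ENNReal.ofReal β * ENNReal.ofReal (s ^ (-β - 1) * Φ s) := by
        apply lintegral_congr_ae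
        filter_upwards [ae_restrict_mem measurableSet_Ioi, ae_restrict_of_ae hae_cont]
          with s hs hcont
        rw [hkey s hs hcont, ENNReal.ofReal_mul hβ0.le,
          ENNReal.ofReal_mul (Real.rpow_nonneg hs.le _), mul_assoc]
    _ = ENNReal.ofReal β * ∫⁻ s in Set.Ioi (0:ℝ), ENNReal.ofReal (s ^ (-β - 1) * Φ s) :=
        lintegral_const_mul' _ _ ENNReal.ofReal_ne_top
end

section
/- Let α > 1, let A be a finite-valued Young function satisfying the ∇₂-condition near infinity, and let M be a Young function. If there exist λ₀ > 0 and δ > 0 such that ∫₀^δ s^{−1/α′} A⁻¹(Ψ_{λ₀}(s)) ds < ∞, then for every λ > 0 there exists δ > 0 such that ∫₀^δ s^{−1/α′} A⁻¹(Ψ_λ(s)) ds < ∞. -/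
open MeasureTheory Set Filter
open scoped ENNReal

/-- `A` satisfies the `∇₂`-condition near infinity. -/
def Nabla2NearInfinity (A : ℝ → ℝ) : Prop :=
  ∃ c > (2:ℝ), ∃ t₀ ≥ (0:ℝ), ∀ t ≥ t₀, c * A t ≤ A (2 * t)


/-!
The `∇₂`-condition for `A` near infinity is the `Δ₂`-condition for `Ã`: for every `k` there are
`C, K` with `Ã(k x) ≤ C Ã(x) + K`. On the first integral of `Ψ_{kλ}` this applies directly. In the
second one the substitution `r ↦ r / k^{α′}` absorbs the factor `k`; it extends the range of
integration by `(s / k^{α′}, s]`, where the integrand is at most its value at the left end, and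
`Δ₂` bounds that value by the integrand of `Ψ_λ` on `(s, 2s]`. Hence `Ψ_{kλ} ≤ B Ψ_λ + K`.
By convexity `A⁻¹(γ u) ≤ γ A⁻¹(u)` for `γ ≥ 1` and `A⁻¹` is finite, so `A⁻¹ ∘ Ψ_{kλ}` is bounded
by an affine function of `A⁻¹ ∘ Ψ_λ`, and the weight `s^{-1/α′}` is integrable near `0`.
-/

open scoped NNReal

def DilationBounded (F : ℝ≥0∞ → ℝ≥0∞) (k : ℝ≥0∞) : Prop :=
  ∃ C K : ℝ≥0, ∀ x, F (k * x) ≤ C * F x + K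

namespace DilationBounded

variable {F : ℝ≥0∞ → ℝ≥0∞} {k k' : ℝ≥0∞}

lemma one : DilationBounded F 1 := ⟨1, 0, fun x => by simp⟩

lemma mul (h : DilationBounded F k) (h' : DilationBounded F k') :
    DilationBounded F (k * k') := by
  obtain ⟨C, K, h⟩ := h
  obtain ⟨C', K', h'⟩ := h'
  refine ⟨C * C', C * K' + K, fun x => ?_⟩
  calc F (k * k' * x) = F (k * (k' * x)) := by rw [mul_assoc]
    _ ≤ C * F (k' * x) + K := h _
    _ ≤ C * (C' * F x + K') + K := by gcongr; exact h' x
    _ = (C * C' : ℝ≥0) * F x + (C * K' + K : ℝ≥0) := by push_cast; ring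

lemma pow (h : DilationBounded F k) (n : ℕ) : DilationBounded F (k ^ n) := by
  induction n with
  | zero => simpa using one
  | succ n ih => simpa [pow_succ] using ih.mul h

lemma mono (hF : Monotone F) (hk : k' ≤ k) (h : DilationBounded F k) :
    DilationBounded F k' := by
  obtain ⟨C, K, h⟩ := h
  exact ⟨C, K, fun x => (hF (mul_le_mul_left hk x)).trans (h x)⟩

end DilationBounded

section Conjugate

variable {A : ℝ → ℝ}

lemma conjE_mono_s4 (A : ℝ → ℝ) : Monotone (conjE A) := fun _ _ h =>
  iSup_mono fun _ => tsub_le_tsub_right (mul_le_mul_left h _) _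

lemma mul_ofReal_le_conjE_add (A : ℝ → ℝ) (x : ℝ≥0∞) {t : ℝ} (ht : 0 ≤ t) :
    x * ENNReal.ofReal t ≤ conjE A x + ENNReal.ofReal (A t) :=
  tsub_le_iff_right.1 <| le_iSup (fun t : {t : ℝ // 0 ≤ t} =>
    x * ENNReal.ofReal t.1 - ENNReal.ofReal (A t.1)) ⟨t, ht⟩

lemma conjE_le_of_forall {x b : ℝ≥0∞}
    (h : ∀ t, 0 ≤ t → x * ENNReal.ofReal t ≤ b + ENNReal.ofReal (A t)) : conjE A x ≤ b :=
  iSup_le fun t => tsub_le_iff_right.2 (h t.1 t.2)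

lemma dilationBounded_conjE_of_nabla2 {c t₀ : ℝ} (hc : 0 ≤ c) (ht₀ : 0 ≤ t₀)
    (H : ∀ t ≥ t₀, c * A t ≤ A (2 * t)) :
    DilationBounded (conjE A) (ENNReal.ofReal (c / 2)) := by
  refine ⟨c.toNNReal, (c * A t₀).toNNReal, fun x => conjE_le_of_forall fun t ht => ?_⟩
  have hsplit : ENNReal.ofReal (c / 2) * x * ENNReal.ofReal t
      = ENNReal.ofReal c * (x * ENNReal.ofReal (t / 2)) := by
    have hc2 : ENNReal.ofReal (c / 2) * ENNReal.ofReal t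
        = ENNReal.ofReal c * ENNReal.ofReal (t / 2) := by
      rw [← ENNReal.ofReal_mul (by positivity), ← ENNReal.ofReal_mul hc]
      ring_nf
    calc _ = x * (ENNReal.ofReal (c / 2) * ENNReal.ofReal t) := by ring
      _ = _ := by rw [hc2]; ring
  change _ ≤ ENNReal.ofReal c * conjE A x + ENNReal.ofReal (c * A t₀) + _
  rw [hsplit]
  rcases le_total t₀ (t / 2) with hlarge | hsmall
  · calc ENNReal.ofReal c * (x * ENNReal.ofReal (t / 2))
        ≤ ENNReal.ofReal c * (conjE A x + ENNReal.ofReal (A (t / 2))) :=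
          mul_le_mul_right (mul_ofReal_le_conjE_add A x (by positivity)) _
      _ = ENNReal.ofReal c * conjE A x + ENNReal.ofReal (c * A (t / 2)) := by
          rw [mul_add, ENNReal.ofReal_mul hc]
      _ ≤ ENNReal.ofReal c * conjE A x + ENNReal.ofReal (A t) := by
          gcongr
          simpa [mul_div_cancel₀] using H _ hlarge
      _ ≤ _ := by gcongr; exact le_self_add
  · calc ENNReal.ofReal c * (x * ENNReal.ofReal (t / 2))
        ≤ ENNReal.ofReal c * (conjE A x + ENNReal.ofReal (A t₀)) := by
          gcongr
          exact (mul_le_mul_right (ENNReal.ofReal_le_ofReal hsmall) x).trans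
            (mul_ofReal_le_conjE_add A x ht₀)
      _ = ENNReal.ofReal c * conjE A x + ENNReal.ofReal (c * A t₀) := by
          rw [mul_add, ENNReal.ofReal_mul hc]
      _ ≤ _ := le_self_add

lemma dilationBounded_conjE (hA : Nabla2NearInfinity A) {k : ℝ≥0∞} (hk : k ≠ ⊤) :
    DilationBounded (conjE A) k := by
  obtain ⟨c, hc, t₀, ht₀, H⟩ := hA
  obtain ⟨n, hn⟩ := pow_unbounded_of_one_lt k.toReal (by linarith : 1 < c / 2)
  refine ((dilationBounded_conjE_of_nabla2 (by linarith) ht₀ H).pow n).mono (conjE_mono_s4 A) ?_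
  rw [← ENNReal.ofReal_pow (by linarith)]
  exact (ENNReal.le_ofReal_iff_toReal_le hk (by positivity)).2 hn.le

end Conjugate

lemma setLIntegral_comp_mul_le {α : Type*} [MeasurableSpace α] {μ : Measure α}
    {F : ℝ≥0∞ → ℝ≥0∞} {k : ℝ≥0∞} {C K : ℝ≥0} (hF : ∀ x, F (k * x) ≤ C * F x + K)
    (f : α → ℝ≥0∞) (s : Set α) :
    ∫⁻ r in s, F (k * f r) ∂μ ≤ C * ∫⁻ r in s, F (f r) ∂μ + K * μ s :=
  calc ∫⁻ r in s, F (k * f r) ∂μ ≤ ∫⁻ r in s, (C * F (f r) + K) ∂μ :=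
        lintegral_mono fun r => hF _
    _ = C * ∫⁻ r in s, F (f r) ∂μ + K * μ s := by
      rw [lintegral_add_right _ measurable_const, lintegral_const_mul' _ _ ENNReal.coe_ne_top,
        setLIntegral_const]

lemma lintegral_mul_lt_top_of_le_affine {α : Type*} [MeasurableSpace α] {μ : Measure α}
    {w f g : α → ℝ≥0∞} (hw : AEMeasurable w μ) {C D : ℝ≥0}
    (hfg : ∀ᵐ x ∂μ, f x ≤ C * g x + D) (hg : ∫⁻ x, w x * g x ∂μ < ⊤)
    (hw_fin : ∫⁻ x, w x ∂μ < ⊤) : ∫⁻ x, w x * f x ∂μ < ⊤ :=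
  calc ∫⁻ x, w x * f x ∂μ ≤ ∫⁻ x, (C * (w x * g x) + D * w x) ∂μ := by
        refine lintegral_mono_ae (hfg.mono fun x hx => ?_)
        calc w x * f x ≤ w x * (C * g x + D) := by gcongr
          _ = C * (w x * g x) + D * w x := by ring
    _ = C * ∫⁻ x, w x * g x ∂μ + D * ∫⁻ x, w x ∂μ := by
        rw [lintegral_add_right' _ (hw.const_mul _), lintegral_const_mul' _ _ ENNReal.coe_ne_top,
          lintegral_const_mul' _ _ ENNReal.coe_ne_top]
    _ < ⊤ := by finiteness

lemma setLIntegral_Ioi_comp_div (g : ℝ → ℝ≥0∞) (s : ℝ) {R : ℝ} (hR : 0 < R) :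
    ∫⁻ r in Ioi s, g (r / R) = ENNReal.ofReal R * ∫⁻ u in Ioi (s / R), g u := by
  have hemb := measurableEmbedding_mulLeft₀ hR.ne'
  calc ∫⁻ r in Ioi s, g (r / R)
      = ∫⁻ r in Ioi s, g (r / R) ∂(ENNReal.ofReal |R| • Measure.map (R * ·) volume) := by
        rw [Real.smul_map_volume_mul_left hR.ne']
    _ = ENNReal.ofReal R * ∫⁻ u in (R * ·) ⁻¹' Ioi s, g (R * u / R) := by
        rw [Measure.restrict_smul, lintegral_smul_measure, abs_of_pos hR, hemb.restrict_map,
          hemb.lintegral_map, smul_eq_mul]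
    _ = ENNReal.ofReal R * ∫⁻ u in Ioi (s / R), g u := by
        simp only [preimage_const_mul_Ioi₀ _ hR, mul_div_cancel_left₀ _ hR.ne']

lemma setLIntegral_Ioi_comp_div_le {h : ℝ → ℝ≥0∞} (hh : AntitoneOn h (Ioi 0)) {R s : ℝ}
    (hR : 1 ≤ R) (hs : 0 < s) :
    ∫⁻ r in Ioi s, h (r / R)
      ≤ ENNReal.ofReal R * (ENNReal.ofReal s * h (s / R) + ∫⁻ r in Ioi s, h r) := by
  have hsR : 0 < s / R := by positivity
  rw [setLIntegral_Ioi_comp_div h s (by linarith), ← Ioc_union_Ioi_eq_Ioi (div_le_self hs.le hR),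
    lintegral_union measurableSet_Ioi Ioc_disjoint_Ioi_same]
  gcongr
  calc ∫⁻ u in Ioc (s / R) s, h u ≤ ∫⁻ _ in Ioc (s / R) s, h (s / R) :=
        setLIntegral_mono_ae' measurableSet_Ioc (ae_of_all _ fun u hu =>
          hh hsR (hsR.trans hu.1) hu.1.le)
    _ ≤ ENNReal.ofReal s * h (s / R) := by
        rw [setLIntegral_const, Real.volume_Ioc, mul_comm]
        gcongr
        linarith

lemma mul_le_setLIntegral_Ioi {h : ℝ → ℝ≥0∞} (hh : AntitoneOn h (Ioi 0)) {s : ℝ}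
    (hs : 0 < s) :
    ENNReal.ofReal s * h (2 * s) ≤ ∫⁻ r in Ioi s, h r :=
  calc ENNReal.ofReal s * h (2 * s) = ∫⁻ _ in Ioc s (2 * s), h (2 * s) := by
        rw [setLIntegral_const, Real.volume_Ioc, mul_comm]; ring_nf
    _ ≤ ∫⁻ r in Ioc s (2 * s), h r :=
        setLIntegral_mono_ae' measurableSet_Ioc (ae_of_all _ fun r hr =>
          hh (hs.trans hr.1) (by simp; linarith) hr.2)
    _ ≤ ∫⁻ r in Ioi s, h r := lintegral_mono_set Ioc_subset_Ioi_self

lemma setLIntegral_Ioi_rpow_mul_le {F : ℝ≥0∞ → ℝ≥0∞} (hF : Monotone F) {p k : ℝ}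
    (hp : 0 < p) (hk : 1 ≤ k) {C K : ℝ≥0}
    (hdil : ∀ x, F (ENNReal.ofReal (2 ^ p * k) * x) ≤ C * F x + K) {b s : ℝ} (hb : 0 ≤ b)
    (hs : 0 < s) :
    ∫⁻ r in Ioi s, F (ENNReal.ofReal (k * (b * r ^ (-p))))
      ≤ ENNReal.ofReal (k ^ p⁻¹) * ((C + 1) * (∫⁻ r in Ioi s, F (ENNReal.ofReal (b * r ^ (-p))))
          + K * ENNReal.ofReal s) := by
  set R := k ^ p⁻¹
  have hk0 : 0 < k := by linarith
  have hR : 1 ≤ R := Real.one_le_rpow hk (inv_nonneg.2 hp.le)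
  set h : ℝ → ℝ≥0∞ := fun u => F (ENNReal.ofReal (b * u ^ (-p)))
  change _ ≤ ENNReal.ofReal R * ((C + 1) * (∫⁻ r in Ioi s, h r) + K * ENNReal.ofReal s)
  set I := ∫⁻ r in Ioi s, h r
  set σ := ENNReal.ofReal s
  have hh : AntitoneOn h (Ioi 0) := fun u hu v _ huv =>
    hF (ENNReal.ofReal_le_ofReal (mul_le_mul_of_nonneg_left
      (Real.rpow_le_rpow_of_nonpos hu huv (by linarith)) hb))
  have hdiv : ∀ u, 0 < u → (u / R) ^ (-p) = k * u ^ (-p) := fun u hu => by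
    have hRp : R ^ p = k := Real.rpow_inv_rpow hk0.le hp.ne'
    rw [Real.div_rpow hu.le (by positivity), Real.rpow_neg (by positivity : (0:ℝ) ≤ R), hRp,
      div_inv_eq_mul, mul_comm]
  have hcorner : h (s / R) ≤ C * h (2 * s) + K := by
    have h2 : b * (s / R) ^ (-p) = 2 ^ p * k * (b * (2 * s) ^ (-p)) := by
      rw [hdiv s hs, Real.mul_rpow (by norm_num) hs.le, Real.rpow_neg (by norm_num : (0:ℝ) ≤ 2)]
      field_simp
    simp only [h]
    rw [h2, ENNReal.ofReal_mul (by positivity)]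
    exact hdil _
  calc ∫⁻ r in Ioi s, F (ENNReal.ofReal (k * (b * r ^ (-p))))
      = ∫⁻ r in Ioi s, h (r / R) := setLIntegral_congr_fun measurableSet_Ioi fun r hr => by
        simp only [h, hdiv r (hs.trans hr)]
        ring_nf
    _ ≤ ENNReal.ofReal R * (σ * h (s / R) + I) := setLIntegral_Ioi_comp_div_le hh hR hs
    _ ≤ ENNReal.ofReal R * (σ * (C * h (2 * s) + K) + I) := by gcongr
    _ = ENNReal.ofReal R * (C * (σ * h (2 * s)) + K * σ + I) := by ring
    _ ≤ ENNReal.ofReal R * (C * I + K * σ + I) := by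
        gcongr
        exact mul_le_setLIntegral_Ioi hh hs
    _ = ENNReal.ofReal R * ((C + 1) * I + K * σ) := by ring

lemma inv_mul_add_le_of_le_mul_add {σ x₁ x₂ y₁ y₂ : ℝ≥0∞} {C₁ C₂ K₁ K₂ : ℝ≥0}
    (hσ₀ : σ ≠ 0) (hσ : σ ≠ ⊤) (h₁ : x₁ ≤ C₁ * y₁ + K₁ * σ) (h₂ : x₂ ≤ C₂ * y₂ + K₂ * σ) :
    σ⁻¹ * (x₁ + x₂) ≤ (max C₁ C₂ : ℝ≥0) * (σ⁻¹ * (y₁ + y₂)) + (K₁ + K₂ : ℝ≥0) := by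
  set C : ℝ≥0 := max C₁ C₂
  calc σ⁻¹ * (x₁ + x₂) ≤ σ⁻¹ * (C₁ * y₁ + K₁ * σ + (C₂ * y₂ + K₂ * σ)) := by gcongr
    _ ≤ σ⁻¹ * (C * y₁ + K₁ * σ + (C * y₂ + K₂ * σ)) := by
        gcongr
        · exact le_max_left _ _
        · exact le_max_right _ _
    _ = C * (σ⁻¹ * (y₁ + y₂)) + (K₁ + K₂ : ℝ≥0) * (σ⁻¹ * σ) := by push_cast; ring
    _ = C * (σ⁻¹ * (y₁ + y₂)) + (K₁ + K₂ : ℝ≥0) := by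
        rw [ENNReal.inv_mul_cancel hσ₀ hσ, mul_one]

section Psi

variable {A M : ℝ → ℝ} {a : ℝ}

lemma rcInv_nonneg (F : ℝ → ℝ) (t : ℝ) : 0 ≤ rcInv F t :=
  Real.sInf_nonneg fun _ hx => hx.1

lemma Psi_mono {lam lam' s : ℝ} (h : lam ≤ lam') (hs : 0 < s) :
    Psi A M a lam s ≤ Psi A M a lam' s := by
  have hF : ∀ {x y : ℝ}, x ≤ y →
      conjE A (ENNReal.ofReal x) ≤ conjE A (ENNReal.ofReal y) :=
    fun hxy => conjE_mono_s4 A (ENNReal.ofReal_le_ofReal hxy)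
  unfold Psi
  gcongr (ENNReal.ofReal s)⁻¹ * (?_ + ?_)
  · refine setLIntegral_mono_ae' measurableSet_Ioc (ae_of_all _ fun r hr => hF ?_)
    have hm := rcInv_nonneg M (1 / r)
    have hr' := Real.rpow_nonneg hr.1.le (1 / a)
    gcongr
  · refine setLIntegral_mono_ae' measurableSet_Ioi (ae_of_all _ fun r hr => hF ?_)
    have hm := rcInv_nonneg M (1 / s)
    have hr' := Real.rpow_nonneg (hs.trans hr).le (-((a - 1) / a))
    gcongr

lemma Psi_mul_le (hA : Nabla2NearInfinity A) (ha : 1 < a) {k : ℝ} (hk : 1 ≤ k) :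
    ∃ B K : ℝ≥0, ∀ lam s : ℝ, 0 ≤ lam → 0 < s →
      Psi A M a (k * lam) s ≤ B * Psi A M a lam s + K := by
  have hp : 0 < (a - 1) / a := div_pos (by linarith) (by linarith)
  obtain ⟨C₁, K₁, h₁⟩ := dilationBounded_conjE hA ENNReal.ofReal_ne_top (k := ENNReal.ofReal k)
  obtain ⟨C₂, K₂, h₂⟩ :=
    dilationBounded_conjE hA ENNReal.ofReal_ne_top (k := ENNReal.ofReal (2 ^ ((a - 1) / a) * k))
  set R := (k ^ ((a - 1) / a)⁻¹).toNNReal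
  refine ⟨max C₁ (R * (C₂ + 1)), K₁ + R * K₂, fun lam s hlam hs => ?_⟩
  unfold Psi
  set p := (a - 1) / a
  set m := rcInv M (1 / s)
  refine inv_mul_add_le_of_le_mul_add (ENNReal.ofReal_pos.2 hs).ne' ENNReal.ofReal_ne_top ?_ ?_
  · have := setLIntegral_comp_mul_le h₁
      (fun r => ENNReal.ofReal (lam * r ^ (1 / a) * rcInv M (1 / r))) (Ioc 0 s) (μ := volume)
    rw [Real.volume_Ioc, sub_zero] at this
    convert this using 4 with r
    rw [← ENNReal.ofReal_mul (by linarith)]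
    ring_nf
  · have := setLIntegral_Ioi_rpow_mul_le (conjE_mono_s4 A) hp hk h₂ (b := lam * s * m)
      (by have := rcInv_nonneg M (1 / s); positivity) hs
    have hscaled : ∀ r : ℝ, k * lam * r ^ (-p) * s * m = k * (lam * s * m * r ^ (-p)) :=
      fun _ => by ring
    have hunscaled : ∀ r : ℝ, lam * r ^ (-p) * s * m = lam * s * m * r ^ (-p) :=
      fun _ => by ring
    simp only [hscaled, hunscaled]
    refine this.trans_eq ?_
    change (R : ℝ≥0∞) * _ = _
    push_cast
    ring

lemma Psi_le_affine (hA : Nabla2NearInfinity A) (ha : 1 < a) {lam₀ : ℝ} (hlam₀ : 0 < lam₀)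
    (lam : ℝ) :
    ∃ B K : ℝ≥0, ∀ s > 0, Psi A M a lam s ≤ B * Psi A M a lam₀ s + K := by
  set k := max (lam / lam₀) 1
  obtain ⟨B, K, h⟩ := Psi_mul_le (M := M) hA ha (le_max_right (lam / lam₀) 1)
  refine ⟨B, K, fun s hs => (Psi_mono ?_ hs).trans (h lam₀ s hlam₀.le hs)⟩
  calc lam = lam / lam₀ * lam₀ := (div_mul_cancel₀ _ hlam₀.ne').symm
    _ ≤ k * lam₀ := by gcongr; exact le_max_left _ _

end Psi

section Inverse

variable {A : ℝ → ℝ}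

lemma IsYoung.mul_le_apply_mul_s4 (hA : IsYoung A) {γ t : ℝ} (hγ : 1 ≤ γ) (ht : 0 ≤ t) :
    γ * A t ≤ A (γ * t) := by
  have hγ0 : 0 < γ := by linarith
  have := hA.convex.2 self_mem_Ici (mem_Ici.2 (by positivity : 0 ≤ γ * t))
    (sub_nonneg.2 (inv_le_one_of_one_le₀ hγ)) (inv_nonneg.2 hγ0.le) (sub_add_cancel 1 γ⁻¹)
  simp only [smul_eq_mul, mul_zero, zero_add, hA.zero, inv_mul_cancel_left₀ hγ0.ne'] at this
  exact (le_inv_mul_iff₀ hγ0).1 this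

lemma IsYoung.exists_lt_apply_s4 (hA : IsYoung A) (b : ℝ) : ∃ t, 0 ≤ t ∧ b < A t := by
  obtain ⟨t₁, ht₁, hAt₁⟩ := hA.nontrivial
  set γ := max (b / A t₁) 0 + 1
  have hγ : b / A t₁ < γ := by linarith [le_max_left (b / A t₁) 0]
  refine ⟨γ * t₁, by positivity, ?_⟩
  calc b < γ * A t₁ := (div_lt_iff₀ hAt₁).1 hγ
    _ ≤ A (γ * t₁) := hA.mul_le_apply_mul_s4 (by linarith [le_max_right (b / A t₁) 0]) ht₁.le

lemma einv_mono_s4 (A : ℝ → ℝ) : Monotone (einv A) := fun _ _ h =>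
  sInf_le_sInf fun _ hx => h.trans_lt hx

lemma einv_le {u x : ℝ≥0∞} (h : u < ENNReal.ofReal (A x.toReal)) : einv A u ≤ x :=
  sInf_le h

lemma einv_lt_top (hA : IsYoung A) {u : ℝ≥0∞} (hu : u ≠ ⊤) : einv A u < ⊤ := by
  obtain ⟨t, ht, hlt⟩ := hA.exists_lt_apply_s4 u.toReal
  refine (einv_le (x := ENNReal.ofReal t) ?_).trans_lt ENNReal.ofReal_lt_top
  rw [ENNReal.toReal_ofReal ht]
  exact (ENNReal.lt_ofReal_iff_toReal_lt hu).2 hlt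

lemma einv_mul_le (hA : IsYoung A) {γ : ℝ≥0} (hγ : 1 ≤ γ) (u : ℝ≥0∞) :
    einv A (γ * u) ≤ γ * einv A u := by
  have hγ0 : (γ : ℝ≥0∞) ≠ 0 := by positivity
  have hmem : ∀ x : ℝ≥0∞, u < ENNReal.ofReal (A x.toReal) →
      γ * u < ENNReal.ofReal (A (γ * x).toReal) := fun x hx =>
    calc γ * u < γ * ENNReal.ofReal (A x.toReal) :=
          (ENNReal.mul_lt_mul_iff_right hγ0 ENNReal.coe_ne_top).2 hx
      _ = ENNReal.ofReal (γ * A x.toReal) := by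
          rw [ENNReal.ofReal_mul NNReal.zero_le_coe, ENNReal.ofReal_coe_nnreal]
      _ ≤ ENNReal.ofReal (A (γ * x).toReal) := by
          rw [ENNReal.toReal_mul, ENNReal.coe_toReal]
          exact ENNReal.ofReal_le_ofReal (hA.mul_le_apply_mul_s4 hγ ENNReal.toReal_nonneg)
  calc einv A (γ * u)
      ≤ ⨅ x : {x : ℝ≥0∞ | u < ENNReal.ofReal (A x.toReal)}, γ * (x : ℝ≥0∞) :=
        le_iInf fun x => einv_le (hmem x x.2)
    _ = γ * einv A u := by
        rw [einv, sInf_eq_iInf', ENNReal.mul_iInf_of_ne hγ0 ENNReal.coe_ne_top]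

lemma einv_add_le (A : ℝ → ℝ) (u v : ℝ≥0∞) :
    einv A (u + v) ≤ einv A (2 * u) + einv A (2 * v) :=
  calc einv A (u + v) ≤ einv A (max (2 * u) (2 * v)) := by
        refine einv_mono_s4 A ?_
        rcases le_total u v with h | h
        · calc u + v ≤ 2 * v := by rw [two_mul]; gcongr
            _ ≤ _ := le_max_right _ _
        · calc u + v ≤ 2 * u := by rw [two_mul]; gcongr
            _ ≤ _ := le_max_left _ _
    _ = max (einv A (2 * u)) (einv A (2 * v)) := (einv_mono_s4 A).map_max
    _ ≤ einv A (2 * u) + einv A (2 * v) := max_le le_self_add le_add_self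

lemma einv_affine_le (hA : IsYoung A) (B K : ℝ≥0) :
    ∃ C D : ℝ≥0, ∀ u, einv A (B * u + K) ≤ C * einv A u + D := by
  refine ⟨max (2 * B) 1, (einv A (2 * K)).toNNReal, fun u => ?_⟩
  have hK : einv A (2 * K) ≠ ⊤ := (einv_lt_top hA (by finiteness)).ne
  calc einv A (B * u + K) ≤ einv A (2 * (B * u)) + einv A (2 * K) := einv_add_le A _ _
    _ ≤ einv A ((max (2 * B) 1 : ℝ≥0) * u) + (einv A (2 * K)).toNNReal := by
        rw [ENNReal.coe_toNNReal hK, ← mul_assoc]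
        gcongr
        refine einv_mono_s4 A (mul_le_mul_left ?_ u)
        exact_mod_cast le_max_left (2 * B) 1
    _ ≤ _ := by gcongr; exact einv_mul_le hA (le_max_right _ _) u

end Inverse

theorem condM_independent_of_lambda_general
    (a : ℝ) (ha : 1 < a) (A M : ℝ → ℝ) (hA : IsYoung A)
    (hnabla : Nabla2NearInfinity A)
    (hsome : ∃ lam₀ > (0:ℝ), ∃ δ > (0:ℝ),
      (∫⁻ s in Set.Ioc (0:ℝ) δ,
        ENNReal.ofReal (s ^ (-((a-1)/a))) * einv A (Psi A M a lam₀ s)) < ⊤) :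
    ∀ lam > (0:ℝ), ∃ δ > (0:ℝ),
      (∫⁻ s in Set.Ioc (0:ℝ) δ,
        ENNReal.ofReal (s ^ (-((a-1)/a))) * einv A (Psi A M a lam s)) < ⊤ := by
  obtain ⟨lam₀, hlam₀, δ, hδ, hfin⟩ := hsome
  intro lam _
  obtain ⟨B, K, hPsi⟩ := Psi_le_affine (M := M) hnabla ha hlam₀ lam
  obtain ⟨C, D, hinv⟩ := einv_affine_le hA B K
  have hexp : -1 < -((a - 1) / a) := by
    have : (a - 1) / a < 1 := (div_lt_one (by linarith)).2 (by linarith)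
    linarith
  have hweight : ∫⁻ s in Ioc 0 δ, ENNReal.ofReal (s ^ (-((a - 1) / a))) < ⊤ :=
    (intervalIntegral.intervalIntegrable_rpow' hexp).1.setLIntegral_lt_top
  refine ⟨δ, hδ,
    lintegral_mul_lt_top_of_le_affine (C := C) (D := D) (by fun_prop) ?_ hfin hweight⟩
  exact (ae_restrict_iff' measurableSet_Ioc).2 (ae_of_all _ fun s hs =>
    (einv_mono_s4 A (hPsi s hs.1)).trans (hinv _))

theorem condM_independent_of_lambda
    (a : ℝ) (ha : 1 < a) (A M : ℝ → ℝ) (hA : IsYoung A) (hM : IsYoung M)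
    (hnabla : Nabla2NearInfinity A)
    (hsome : ∃ lam₀ > (0:ℝ), ∃ δ > (0:ℝ),
      (∫⁻ s in Set.Ioc (0:ℝ) δ,
        ENNReal.ofReal (s ^ (-((a-1)/a))) * einv A (Psi A M a lam₀ s)) < ⊤) :
    ∀ lam > (0:ℝ), ∃ δ > (0:ℝ),
      (∫⁻ s in Set.Ioc (0:ℝ) δ,
        ENNReal.ofReal (s ^ (-((a-1)/a))) * einv A (Psi A M a lam s)) < ⊤ :=
  condM_independent_of_lambda_general a ha A M hA hnabla hsome
end

section
/- Let n ≥ 2 be an integer and n′ = n/(n−1). Let g : (0,∞) → [0,∞) be nonincreasing and locally integrable, and set G(s) = (1/s) ∫₀^s g(r) dr for s > 0. Then for every s > 0: G(s^{1/n′}) ≤ (1/s) ∫₀^s G(r^{1/n′}) dr ≤ n · G(s^{1/n′}). -/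
/-!
Since `G` is nonincreasing, `G(s^{1/n'}) ≤ G(r^{1/n'})` for `r ≤ s`, which gives the lower bound.
For the upper bound, enlarge the integral in `G(r^{1/n'})` to `∫₀^{s^{1/n'}} g`, so that
`G(r^{1/n'}) ≤ s^{1/n'} G(s^{1/n'}) r^{-1/n'}`; integrating `r^{-1/n'}` over `(0, s)` gives
`n s^{1/n}`, i.e. the factor `1/(1 - 1/n') = n`.
-/

open MeasureTheory Set
open scoped ENNReal

noncomputable def levelAvg (g : ℝ → ℝ≥0∞) (s : ℝ) : ℝ≥0∞ :=
  (∫⁻ r in Set.Ioc (0:ℝ) s, g r) / ENNReal.ofReal s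

section LevelAvg

variable {g : ℝ → ℝ≥0∞} {a b : ℝ}

lemma levelAvg_mul_ofReal (ha : 0 < a) :
    levelAvg g a * ENNReal.ofReal a = ∫⁻ r in Ioc 0 a, g r :=
  ENNReal.div_mul_cancel (by simpa using ha) ENNReal.ofReal_ne_top

lemma levelAvg_le_of_le (hab : a ≤ b) :
    levelAvg g a ≤ (∫⁻ r in Ioc 0 b, g r) / ENNReal.ofReal a :=
  ENNReal.div_le_div_right (lintegral_mono_set (Ioc_subset_Ioc_right hab)) _

lemma setLIntegral_Ioc_le_mul_of_antitoneOn (hg : AntitoneOn g (Ioi 0)) (ha : 0 < a) :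
    ∫⁻ r in Ioc a b, g r ≤ g a * ENNReal.ofReal (b - a) := by
  calc ∫⁻ r in Ioc a b, g r ≤ ∫⁻ _ in Ioc a b, g a :=
        setLIntegral_mono' measurableSet_Ioc fun x hx => hg ha (ha.trans hx.1) hx.1.le
    _ = g a * ENNReal.ofReal (b - a) := by rw [setLIntegral_const, Real.volume_Ioc]

lemma apply_le_levelAvg (hg : AntitoneOn g (Ioi 0)) (ha : 0 < a) : g a ≤ levelAvg g a := by
  refine ENNReal.le_div_iff_mul_le (Or.inl (by simpa using ha)) (Or.inl ENNReal.ofReal_ne_top)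
    |>.2 ?_
  calc g a * ENNReal.ofReal a = ∫⁻ _ in Ioc 0 a, g a := by
        rw [setLIntegral_const, Real.volume_Ioc, sub_zero]
    _ ≤ ∫⁻ r in Ioc 0 a, g r :=
        setLIntegral_mono' measurableSet_Ioc fun x hx => hg hx.1 ha hx.2

lemma levelAvg_antitoneOn (hg : AntitoneOn g (Ioi 0)) : AntitoneOn (levelAvg g) (Ioi 0) := by
  intro a ha b hb hab
  refine ENNReal.div_le_iff (by simpa using hb) ENNReal.ofReal_ne_top |>.2 ?_
  calc ∫⁻ r in Ioc 0 b, g r = (∫⁻ r in Ioc 0 a, g r) + ∫⁻ r in Ioc a b, g r := by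
        rw [← lintegral_union measurableSet_Ioc (Ioc_disjoint_Ioc_of_le le_rfl),
          Ioc_union_Ioc_eq_Ioc (le_of_lt ha) hab]
    _ ≤ levelAvg g a * ENNReal.ofReal a + levelAvg g a * ENNReal.ofReal (b - a) := by
        rw [levelAvg_mul_ofReal ha]
        gcongr
        exact (setLIntegral_Ioc_le_mul_of_antitoneOn hg ha).trans
          (mul_le_mul_left (apply_le_levelAvg hg ha) _)
    _ = levelAvg g a * ENNReal.ofReal b := by
        rw [← mul_add, ← ENNReal.ofReal_add (le_of_lt ha) (sub_nonneg.2 hab), add_sub_cancel]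

end LevelAvg

lemma setLIntegral_Ioc_ofReal_rpow_neg {α s : ℝ} (hα : α < 1) (hs : 0 ≤ s) :
    ∫⁻ r in Ioc 0 s, ENNReal.ofReal (r ^ (-α)) = ENNReal.ofReal (s ^ (1 - α) / (1 - α)) := by
  have hint : IntegrableOn (fun r : ℝ => r ^ (-α)) (Ioc 0 s) :=
    (intervalIntegrable_iff_integrableOn_Ioc_of_le hs).1
      (intervalIntegral.intervalIntegrable_rpow' (by linarith))
  rw [← ofReal_integral_eq_lintegral_ofReal hint
      ((ae_restrict_iff' measurableSet_Ioc).2 (ae_of_all _ fun x hx => Real.rpow_nonneg hx.1.le _)),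
    ← intervalIntegral.integral_of_le hs, integral_rpow (Or.inl (by linarith)),
    Real.zero_rpow (by linarith), sub_zero, neg_add_eq_sub]

section PowerAverage

variable {g : ℝ → ℝ≥0∞} {α s : ℝ}

lemma levelAvg_rpow_le_average (hg : AntitoneOn g (Ioi 0)) (hα : 0 ≤ α) (hs : 0 < s) :
    levelAvg g (s ^ α) ≤
      (∫⁻ r in Ioc 0 s, levelAvg g (r ^ α)) / ENNReal.ofReal s := by
  refine ENNReal.le_div_iff_mul_le (Or.inl (by simpa using hs)) (Or.inl ENNReal.ofReal_ne_top)
    |>.2 ?_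
  calc levelAvg g (s ^ α) * ENNReal.ofReal s = ∫⁻ _ in Ioc 0 s, levelAvg g (s ^ α) := by
        rw [setLIntegral_const, Real.volume_Ioc, sub_zero]
    _ ≤ ∫⁻ r in Ioc 0 s, levelAvg g (r ^ α) :=
        setLIntegral_mono' measurableSet_Ioc fun r hr =>
          levelAvg_antitoneOn hg (Real.rpow_pos_of_pos hr.1 α) (Real.rpow_pos_of_pos hs α)
            (Real.rpow_le_rpow hr.1.le hr.2 hα)

lemma average_levelAvg_rpow_le (hα₀ : 0 ≤ α) (hα₁ : α < 1) (hs : 0 < s) :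
    (∫⁻ r in Ioc 0 s, levelAvg g (r ^ α)) / ENNReal.ofReal s ≤
      ENNReal.ofReal (1 - α)⁻¹ * levelAvg g (s ^ α) := by
  set C := ∫⁻ r in Ioc 0 (s ^ α), g r
  have hpointwise : ∀ r ∈ Ioc 0 s, levelAvg g (r ^ α) ≤ C * ENNReal.ofReal (r ^ (-α)) := by
    intro r hr
    rw [Real.rpow_neg hr.1.le, ENNReal.ofReal_inv_of_pos (Real.rpow_pos_of_pos hr.1 α),
      ← div_eq_mul_inv]
    exact levelAvg_le_of_le (Real.rpow_le_rpow hr.1.le hr.2 hα₀)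
  have hsplit : ENNReal.ofReal s = ENNReal.ofReal (s ^ α) * ENNReal.ofReal (s ^ (1 - α)) := by
    rw [← ENNReal.ofReal_mul (Real.rpow_nonneg hs.le _), ← Real.rpow_add hs, add_sub_cancel]
    simp
  calc (∫⁻ r in Ioc 0 s, levelAvg g (r ^ α)) / ENNReal.ofReal s
      ≤ (∫⁻ r in Ioc 0 s, C * ENNReal.ofReal (r ^ (-α))) / ENNReal.ofReal s := by
        gcongr ?_ / _
        exact setLIntegral_mono' measurableSet_Ioc hpointwise
    _ = ENNReal.ofReal (1 - α)⁻¹ * (C * ENNReal.ofReal (s ^ (1 - α)))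
          / (ENNReal.ofReal (s ^ α) * ENNReal.ofReal (s ^ (1 - α))) := by
        rw [lintegral_const_mul _ (by fun_prop), setLIntegral_Ioc_ofReal_rpow_neg hα₁ hs.le,
          div_eq_mul_inv _ (1 - α), mul_comm _ (1 - α)⁻¹,
          ENNReal.ofReal_mul (inv_nonneg.2 (by linarith)), hsplit, mul_left_comm]
    _ = ENNReal.ofReal (1 - α)⁻¹ * levelAvg g (s ^ α) := by
        rw [← mul_assoc, ENNReal.mul_div_mul_right _ _
          (by simpa using Real.rpow_pos_of_pos hs _) ENNReal.ofReal_ne_top, mul_div_assoc,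
          levelAvg]

end PowerAverage

theorem levelAvg_power_average_equiv_general
    (n : ℕ) (hn : 2 ≤ n) (g : ℝ → ℝ≥0∞)
    (hg : AntitoneOn g (Set.Ioi 0)) :
    ∀ s > (0:ℝ),
      levelAvg g (s ^ (((n:ℝ)-1)/n)) ≤
        (∫⁻ r in Set.Ioc (0:ℝ) s, levelAvg g (r ^ (((n:ℝ)-1)/n))) / ENNReal.ofReal s ∧
      (∫⁻ r in Set.Ioc (0:ℝ) s, levelAvg g (r ^ (((n:ℝ)-1)/n))) / ENNReal.ofReal s ≤
        (n : ℝ≥0∞) * levelAvg g (s ^ (((n:ℝ)-1)/n)) := by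
  intro s hs
  have hn₂ : (2:ℝ) ≤ n := by exact_mod_cast hn
  have hn₀ : (0:ℝ) < n := by linarith
  have hα₀ : 0 ≤ ((n:ℝ) - 1) / n := div_nonneg (by linarith) hn₀.le
  have hα₁ : ((n:ℝ) - 1) / n < 1 := (div_lt_one hn₀).2 (by linarith)
  have hn_eq : ENNReal.ofReal (1 - ((n:ℝ) - 1) / n)⁻¹ = n := by
    rw [one_sub_div hn₀.ne', sub_sub_cancel, one_div, inv_inv, ENNReal.ofReal_natCast]
  exact ⟨levelAvg_rpow_le_average hg hα₀ hs, hn_eq ▸ average_levelAvg_rpow_le hα₀ hα₁ hs⟩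

theorem levelAvg_power_average_equiv
    (n : ℕ) (hn : 2 ≤ n) (g : ℝ → ℝ≥0∞)
    (hg : AntitoneOn g (Set.Ioi 0))
    (hloc : ∀ s > (0:ℝ), (∫⁻ r in Set.Ioc (0:ℝ) s, g r) < ⊤) :
    ∀ s > (0:ℝ),
      levelAvg g (s ^ (((n:ℝ)-1)/n)) ≤
        (∫⁻ r in Set.Ioc (0:ℝ) s, levelAvg g (r ^ (((n:ℝ)-1)/n))) / ENNReal.ofReal s ∧
      (∫⁻ r in Set.Ioc (0:ℝ) s, levelAvg g (r ^ (((n:ℝ)-1)/n))) / ENNReal.ofReal s ≤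
        (n : ℝ≥0∞) * levelAvg g (s ^ (((n:ℝ)-1)/n)) :=
  levelAvg_power_average_equiv_general n hn g hg
end

section
/- Let n ≥ 2 be an integer, n′ = n/(n−1), and let A be a finite-valued Young function with A(t) > 0 for t > 0 and ∫₀ (τ/A(τ))^{1/(n−1)} dτ < ∞ near zero. Suppose there exists ε ∈ (0, 1/n) such that t ↦ A(t)/t^{1+ε} is nondecreasing on (0,∞). Then for every t > 0: ∫₀^t (A(τ)/τ)^{(n−2)/(n−1)} H_n(τ)^{−1/(n−1)} dτ ≤ n′ (1−ε) (A(t)/t) H_n(t). -/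
open MeasureTheory Set Filter
open scoped ENNReal

/-- `H_n(t) = ( ∫₀^t (τ/A(τ))^{1/(n−1)} dτ )^{1/n′}`, where `n′ = n/(n−1)`. -/
noncomputable def Hn (A : ℝ → ℝ) (n : ℕ) (t : ℝ) : ℝ :=
  ((∫⁻ τ in Set.Ioc (0:ℝ) t,
      ENNReal.ofReal ((τ / A τ) ^ (1/((n:ℝ)-1)))).toReal) ^ (((n:ℝ)-1)/n)

/-- The inverse of `H_n` (as a generalized inverse). -/
noncomputable def HnInv (A : ℝ → ℝ) (n : ℕ) (t : ℝ) : ℝ :=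
  sInf {s : ℝ | 0 ≤ s ∧ t ≤ Hn A n s}

/-- The Sobolev trace conjugate `A_T(t) = ∫₀^t A(H_n⁻¹(τ))/H_n⁻¹(τ) dτ`. -/
noncomputable def AT (A : ℝ → ℝ) (n : ℕ) (t : ℝ) : ℝ :=
  ∫ τ in Set.Ioc (0:ℝ) t, A (HnInv A n τ) / HnInv A n τ

/-- `∫₀ (τ/A(τ))^{1/(n−1)} dτ < ∞` near zero. -/
def ConvNearZero (A : ℝ → ℝ) (n : ℕ) : Prop :=
  ∃ δ > (0:ℝ), (∫⁻ τ in Set.Ioc (0:ℝ) δ,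
    ENNReal.ofReal ((τ / A τ) ^ (1/((n:ℝ)-1)))) < ⊤

/-- `∫^∞ (τ/A(τ))^{1/(n−1)} dτ = ∞`. -/
def DivNearInfty (A : ℝ → ℝ) (n : ℕ) : Prop :=
  (∫⁻ τ in Set.Ioi (1:ℝ), ENNReal.ofReal ((τ / A τ) ^ (1/((n:ℝ)-1)))) = ⊤

/-! Write `G(t) = ∫₀^t (τ/A(τ))^{1/(n-1)} dτ`, so that `H_n = G^{(n-1)/n}`. The growth condition
gives `A(τ)/τ ≤ (A(t)/t) (τ/t)^ε` for `τ ≤ t`. In particular `A(s)/s` is nondecreasing, so the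
integrand of `G` is nonincreasing and `G(τ)/τ ≥ G(t)/t`. Together these bound the integrand of the
claim by a constant times `(τ/t)^α` with `α = ε(n-2)/(n-1) - 1/n > -1`, which integrates
explicitly. Integrating the reverse bound `(τ/A(τ))^{1/(n-1)} ≥ (t/A(t))^{1/(n-1)} (τ/t)^{-ε/(n-1)}`
gives `G(t) ≥ t (t/A(t))^{1/(n-1)} / (1 - ε/(n-1))`, and with it the constant obtained is at most
`n'(1-ε)` as soon as `εn ≤ 1`. -/

section AntitoneAverage

variable {g : ℝ → ℝ≥0∞} {τ t : ℝ}

theorem ofReal_mul_lintegral_Ioc_le_of_antitoneOn (hg : AntitoneOn g (Ioi 0)) (hτ : 0 < τ)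
    (hτt : τ ≤ t) :
    ENNReal.ofReal τ * ∫⁻ s in Ioc 0 t, g s ≤ ENNReal.ofReal t * ∫⁻ s in Ioc 0 τ, g s := by
  have hsplit : ∫⁻ s in Ioc 0 t, g s = (∫⁻ s in Ioc 0 τ, g s) + ∫⁻ s in Ioc τ t, g s := by
    rw [← lintegral_union measurableSet_Ioc (Ioc_disjoint_Ioc_of_le le_rfl),
      Ioc_union_Ioc_eq_Ioc hτ.le hτt]
  have htail : ∫⁻ s in Ioc τ t, g s ≤ ENNReal.ofReal (t - τ) * g τ :=
    calc ∫⁻ s in Ioc τ t, g s ≤ ∫⁻ _ in Ioc τ t, g τ :=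
          setLIntegral_mono' measurableSet_Ioc fun s hs => hg hτ (hτ.trans hs.1) hs.1.le
      _ = ENNReal.ofReal (t - τ) * g τ := by rw [setLIntegral_const, Real.volume_Ioc, mul_comm]
  have hhead : ENNReal.ofReal τ * g τ ≤ ∫⁻ s in Ioc 0 τ, g s :=
    calc ENNReal.ofReal τ * g τ = ∫⁻ _ in Ioc 0 τ, g τ := by
          rw [setLIntegral_const, Real.volume_Ioc, sub_zero, mul_comm]
      _ ≤ ∫⁻ s in Ioc 0 τ, g s := setLIntegral_mono' measurableSet_Ioc fun s hs => hg hs.1 hτ hs.2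
  calc ENNReal.ofReal τ * ∫⁻ s in Ioc 0 t, g s
      ≤ ENNReal.ofReal τ * (∫⁻ s in Ioc 0 τ, g s) +
          ENNReal.ofReal (t - τ) * (ENNReal.ofReal τ * g τ) := by
        rw [hsplit, mul_add, mul_left_comm]
        gcongr
    _ ≤ ENNReal.ofReal τ * (∫⁻ s in Ioc 0 τ, g s) +
          ENNReal.ofReal (t - τ) * ∫⁻ s in Ioc 0 τ, g s := by
        gcongr
    _ = ENNReal.ofReal t * ∫⁻ s in Ioc 0 τ, g s := by
        rw [← add_mul, ← ENNReal.ofReal_add hτ.le (sub_nonneg.2 hτt), add_sub_cancel]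

theorem lintegral_Ioc_lt_top_of_antitoneOn (hg : AntitoneOn g (Ioi 0)) {δ : ℝ} (hδ : 0 < δ)
    (hδfin : ∫⁻ s in Ioc 0 δ, g s < ⊤) (t : ℝ) : ∫⁻ s in Ioc 0 t, g s < ⊤ := by
  rcases le_or_gt t δ with htδ | hδt
  · exact (lintegral_mono_set (Ioc_subset_Ioc_right htδ)).trans_lt hδfin
  · refine ENNReal.lt_top_of_mul_ne_top_right ?_ (ENNReal.ofReal_pos.2 hδ).ne'
    exact ((ofReal_mul_lintegral_Ioc_le_of_antitoneOn hg hδ hδt.le).trans_lt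
      (ENNReal.mul_lt_top ENNReal.ofReal_lt_top hδfin)).ne

theorem toReal_lintegral_Ioc_mul_div_le_of_antitoneOn (hg : AntitoneOn g (Ioi 0))
    (hτfin : ∫⁻ s in Ioc 0 τ, g s ≠ ⊤) (hτ : 0 < τ) (hτt : τ ≤ t) :
    (∫⁻ s in Ioc 0 t, g s).toReal * (τ / t) ≤ (∫⁻ s in Ioc 0 τ, g s).toReal := by
  have ht := hτ.trans_le hτt
  have h := ENNReal.toReal_mono (ENNReal.mul_ne_top ENNReal.ofReal_ne_top hτfin)
    (ofReal_mul_lintegral_Ioc_le_of_antitoneOn hg hτ hτt)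
  rw [ENNReal.toReal_mul, ENNReal.toReal_mul, ENNReal.toReal_ofReal hτ.le,
    ENNReal.toReal_ofReal ht.le] at h
  rw [mul_div, div_le_iff₀ ht]
  linarith

end AntitoneAverage

theorem lintegral_Ioc_div_rpow {r t : ℝ} (hr : -1 < r) (ht : 0 < t) :
    ∫⁻ s in Ioc 0 t, ENNReal.ofReal ((s / t) ^ r) = ENNReal.ofReal (t / (r + 1)) := by
  have hdiv : EqOn (fun s => (s / t) ^ r) (fun s => s ^ r / t ^ r) (Ioc 0 t) :=
    fun s hs => Real.div_rpow hs.1.le ht.le r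
  have hint : IntegrableOn (fun s => s ^ r / t ^ r) (Ioc 0 t) := by
    have := (intervalIntegral.intervalIntegrable_rpow' (a := 0) (b := t) hr).div_const (t ^ r)
    rwa [intervalIntegrable_iff_integrableOn_Ioc_of_le ht.le] at this
  rw [setLIntegral_congr_fun measurableSet_Ioc fun s hs => congrArg ENNReal.ofReal (hdiv hs),
    ← ofReal_integral_eq_lintegral_ofReal hint ((ae_restrict_mem measurableSet_Ioc).mono
      fun s hs => div_nonneg (Real.rpow_nonneg hs.1.le r) (Real.rpow_nonneg ht.le r)),
    ← intervalIntegral.integral_of_le ht.le, intervalIntegral.integral_div,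
    integral_rpow (Or.inl hr), Real.zero_rpow (by linarith), sub_zero, Real.rpow_add_one ht.ne']
  congr 1
  field_simp

section RatioMonotone

variable {A : ℝ → ℝ} {ε τ t : ℝ}

theorem div_le_div_mul_div_rpow (hA : MonotoneOn (fun s => A s / s ^ (1 + ε)) (Ioi 0))
    (hτ : 0 < τ) (hτt : τ ≤ t) : A τ / τ ≤ A t / t * (τ / t) ^ ε := by
  have ht := hτ.trans_le hτt
  have hratio : A τ / (τ * τ ^ ε) ≤ A t / (t * t ^ ε) := by
    simpa only [Real.rpow_add hτ, Real.rpow_add ht, Real.rpow_one] using hA hτ ht hτt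
  calc A τ / τ = A τ / (τ * τ ^ ε) * τ ^ ε := by field_simp
    _ ≤ A t / (t * t ^ ε) * τ ^ ε := by gcongr
    _ = A t / t * (τ / t) ^ ε := by rw [Real.div_rpow hτ.le ht.le]; field_simp

theorem monotoneOn_div_self_of_monotoneOn_div_rpow
    (hA : MonotoneOn (fun s => A s / s ^ (1 + ε)) (Ioi 0)) (hA0 : ∀ s > 0, 0 ≤ A s)
    (hε : 0 ≤ ε) : MonotoneOn (fun s => A s / s) (Ioi 0) :=
  fun τ (hτ : 0 < τ) t (ht : 0 < t) hτt =>
  calc A τ / τ ≤ A t / t * (τ / t) ^ ε := div_le_div_mul_div_rpow hA hτ hτt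
    _ ≤ A t / t := by
      have := hA0 t ht
      refine mul_le_of_le_one_right (by positivity) (Real.rpow_le_one (by positivity) ?_ hε)
      exact div_le_one_of_le₀ hτt ht.le

theorem antitoneOn_ofReal_div_rpow (hA : MonotoneOn (fun s => A s / s) (Ioi 0))
    (hApos : ∀ s > 0, 0 < A s) {q : ℝ} (hq : 0 ≤ q) :
    AntitoneOn (fun s => ENNReal.ofReal ((s / A s) ^ q)) (Ioi 0) :=
  fun τ (hτ : 0 < τ) t (ht : 0 < t) hτt => by
  have := hApos τ hτ
  have := hApos t ht
  refine ENNReal.ofReal_le_ofReal (Real.rpow_le_rpow (by positivity) ?_ hq)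
  rw [← inv_div, ← inv_div (A τ)]
  exact inv_anti₀ (by positivity) (hA hτ ht hτt)

theorem div_rpow_mul_div_rpow_le (hA : MonotoneOn (fun s => A s / s ^ (1 + ε)) (Ioi 0))
    (hApos : ∀ s > 0, 0 < A s) {q : ℝ} (hq : 0 ≤ q) (hτ : 0 < τ) (hτt : τ ≤ t) :
    (t / A t) ^ q * (τ / t) ^ (-(ε * q)) ≤ (τ / A τ) ^ q := by
  have ht := hτ.trans_le hτt
  have := hApos τ hτ
  have := hApos t ht
  have hinv : t / A t * (τ / t) ^ (-ε) ≤ τ / A τ := by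
    rw [← inv_div, ← inv_div (A τ), Real.rpow_neg (by positivity), ← mul_inv]
    exact inv_anti₀ (by positivity) (div_le_div_mul_div_rpow hA hτ hτt)
  calc (t / A t) ^ q * (τ / t) ^ (-(ε * q)) = (t / A t * (τ / t) ^ (-ε)) ^ q := by
        rw [Real.mul_rpow (by positivity) (by positivity), ← Real.rpow_mul (by positivity),
          neg_mul]
    _ ≤ (τ / A τ) ^ q := by gcongr

theorem ofReal_le_lintegral_Ioc_div_rpow (hA : MonotoneOn (fun s => A s / s ^ (1 + ε)) (Ioi 0))
    (hApos : ∀ s > 0, 0 < A s) {q : ℝ} (hq : 0 ≤ q) (hεq : ε * q < 1) (ht : 0 < t) :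
    ENNReal.ofReal (t * (t / A t) ^ q / (1 - ε * q)) ≤
      ∫⁻ s in Ioc 0 t, ENNReal.ofReal ((s / A s) ^ q) := by
  have hAt := hApos t ht
  have hc : 0 ≤ (t / A t) ^ q := by positivity
  calc ENNReal.ofReal (t * (t / A t) ^ q / (1 - ε * q))
      = ENNReal.ofReal ((t / A t) ^ q) *
          ∫⁻ s in Ioc 0 t, ENNReal.ofReal ((s / t) ^ (-(ε * q))) := by
        rw [lintegral_Ioc_div_rpow (by linarith) ht, ← ENNReal.ofReal_mul hc, neg_add_eq_sub]
        ring_nf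
    _ = ∫⁻ s in Ioc 0 t, ENNReal.ofReal ((t / A t) ^ q * (s / t) ^ (-(ε * q))) := by
        rw [← lintegral_const_mul' _ _ ENNReal.ofReal_ne_top]
        simp_rw [ENNReal.ofReal_mul hc]
    _ ≤ ∫⁻ s in Ioc 0 t, ENNReal.ofReal ((s / A s) ^ q) :=
        setLIntegral_mono' measurableSet_Ioc fun s hs =>
          ENNReal.ofReal_le_ofReal (div_rpow_mul_div_rpow_le hA hApos hq hs.1 hs.2)

theorem div_rpow_mul_rpow_neg_le (hA : MonotoneOn (fun s => A s / s ^ (1 + ε)) (Ioi 0))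
    (hApos : ∀ s > 0, 0 < A s) {p b a c : ℝ} (hp : 0 ≤ p) (hb : 0 ≤ b) (hc : 0 < c)
    (hca : c * (τ / t) ≤ a) (hτ : 0 < τ) (hτt : τ ≤ t) :
    (A τ / τ) ^ p * a ^ (-b) ≤ (A t / t) ^ p * c ^ (-b) * (τ / t) ^ (ε * p - b) := by
  have ht := hτ.trans_le hτt
  have := hApos τ hτ
  have := hApos t ht
  have : 0 < a := lt_of_lt_of_le (by positivity) hca
  have hA' : (A τ / τ) ^ p ≤ (A t / t) ^ p * (τ / t) ^ (ε * p) := by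
    rw [Real.rpow_mul (by positivity), ← Real.mul_rpow (by positivity) (by positivity)]
    exact Real.rpow_le_rpow (by positivity) (div_le_div_mul_div_rpow hA hτ hτt) hp
  have ha : a ^ (-b) ≤ c ^ (-b) * (τ / t) ^ (-b) := by
    rw [← Real.mul_rpow hc.le (by positivity)]
    exact Real.rpow_le_rpow_of_nonpos (by positivity) hca (neg_nonpos.2 hb)
  calc (A τ / τ) ^ p * a ^ (-b)
      ≤ (A t / t) ^ p * (τ / t) ^ (ε * p) * (c ^ (-b) * (τ / t) ^ (-b)) := by gcongr
    _ = (A t / t) ^ p * c ^ (-b) * (τ / t) ^ (ε * p - b) := by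
        rw [sub_eq_add_neg, Real.rpow_add (by positivity)]
        ring

end RatioMonotone

theorem mul_one_div_sub_one_lt_one {m ε : ℝ} (hm : 2 ≤ m) (hεm : ε * m ≤ 1) :
    ε * (1 / (m - 1)) < 1 := by
  rw [← div_eq_mul_one_div, div_lt_one (by linarith)]
  nlinarith

theorem neg_one_lt_mul_div_sub_one_div {m ε : ℝ} (hm : 2 ≤ m) (hε : 0 ≤ ε) :
    -1 < ε * ((m - 2) / (m - 1)) - 1 / m := by
  have : 0 ≤ ε * ((m - 2) / (m - 1)) := mul_nonneg hε (div_nonneg (by linarith) (by linarith))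
  have : 1 / m < 1 := by rw [div_lt_one (by linarith)]; linarith
  linarith

theorem div_rpow_mul_rpow_neg_mul_le {m ε a t G : ℝ} (hm : 2 ≤ m) (hε : 0 ≤ ε)
    (hεm : ε * m ≤ 1) (ha : 0 < a) (ht : 0 < t)
    (hG : t * (t / a) ^ (1 / (m - 1)) / (1 - ε * (1 / (m - 1))) ≤ G) :
    (a / t) ^ ((m - 2) / (m - 1)) * G ^ (-(1 / m)) * (t / (ε * ((m - 2) / (m - 1)) - 1 / m + 1))
      ≤ m / (m - 1) * (1 - ε) * (a / t) * G ^ ((m - 1) / m) := by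
  set q := 1 / (m - 1) with hq
  have hm1 : 0 < m - 1 := by linarith
  have hεq : 0 < 1 - ε * q := sub_pos.2 (mul_one_div_sub_one_lt_one hm hεm)
  set α := ε * ((m - 2) / (m - 1)) - 1 / m with hα
  have hα1 : 0 < α + 1 := by linarith [neg_one_lt_mul_div_sub_one_div hm hε]
  have hG0 : 0 < G := lt_of_lt_of_le (by positivity) hG
  have hpow : (a / t) ^ ((m - 2) / (m - 1)) * t = a / t * (t * (t / a) ^ q) := by
    rw [show (m - 2) / (m - 1) = 1 - q by rw [hq]; field_simp; ring,
      Real.rpow_sub (by positivity), Real.rpow_one, ← inv_div a, Real.inv_rpow (by positivity)]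
    field_simp
  have hGpow : G ^ (-(1 / m)) * G = G ^ ((m - 1) / m) := by
    rw [show (m - 1) / m = -(1 / m) + 1 by field_simp; ring, Real.rpow_add hG0, Real.rpow_one]
  have harith : (1 - ε * q) / (α + 1) ≤ m / (m - 1) * (1 - ε) := by
    rw [div_le_iff₀ hα1, hα, hq]
    field_simp
    nlinarith [mul_nonneg (mul_nonneg hε (by linarith : 0 ≤ m - 2)) (by linarith : 0 ≤ 1 - ε * m)]
  calc (a / t) ^ ((m - 2) / (m - 1)) * G ^ (-(1 / m)) * (t / (α + 1))
      = a / t * (t * (t / a) ^ q) * G ^ (-(1 / m)) / (α + 1) := by rw [← hpow]; ring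
    _ ≤ a / t * ((1 - ε * q) * G) * G ^ (-(1 / m)) / (α + 1) := by
        gcongr a / t * ?_ * _ / _
        rwa [← div_le_iff₀' hεq]
    _ = a / t * G ^ ((m - 1) / m) * ((1 - ε * q) / (α + 1)) := by rw [← hGpow]; ring
    _ ≤ a / t * G ^ ((m - 1) / m) * (m / (m - 1) * (1 - ε)) := by gcongr
    _ = m / (m - 1) * (1 - ε) * (a / t) * G ^ ((m - 1) / m) := by ring

theorem lintegral_Ioc_div_rpow_mul_rpow_le {A : ℝ → ℝ} {m ε t : ℝ} (hm : 2 ≤ m) (hε : 0 ≤ ε)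
    (hεm : ε * m ≤ 1) (hA : MonotoneOn (fun s => A s / s ^ (1 + ε)) (Ioi 0))
    (hApos : ∀ s > 0, 0 < A s) {G : ℝ → ℝ} (hGavg : ∀ τ ∈ Ioc 0 t, G t * (τ / t) ≤ G τ)
    (hGlow : t * (t / A t) ^ (1 / (m - 1)) / (1 - ε * (1 / (m - 1))) ≤ G t) (ht : 0 < t) :
    ∫⁻ τ in Ioc 0 t, ENNReal.ofReal ((A τ / τ) ^ ((m - 2) / (m - 1)) *
        (G τ ^ ((m - 1) / m)) ^ (-(1 / (m - 1)))) ≤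
      ENNReal.ofReal (m / (m - 1) * (1 - ε) * (A t / t) * G t ^ ((m - 1) / m)) := by
  have hAt := hApos t ht
  have hGt : 0 < G t := lt_of_lt_of_le
    (div_pos (by positivity) (sub_pos.2 (mul_one_div_sub_one_lt_one hm hεm))) hGlow
  set p := (m - 2) / (m - 1)
  set K := (A t / t) ^ p * G t ^ (-(1 / m))
  have hK : 0 ≤ K := by positivity
  calc ∫⁻ τ in Ioc 0 t,
        ENNReal.ofReal ((A τ / τ) ^ p * (G τ ^ ((m - 1) / m)) ^ (-(1 / (m - 1))))
      ≤ ∫⁻ τ in Ioc 0 t, ENNReal.ofReal (K * (τ / t) ^ (ε * p - 1 / m)) := by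
        refine setLIntegral_mono' measurableSet_Ioc fun τ hτ => ENNReal.ofReal_le_ofReal ?_
        have hGτ : 0 ≤ G τ :=
          (mul_nonneg hGt.le (div_nonneg hτ.1.le ht.le)).trans (hGavg τ hτ)
        rw [← Real.rpow_mul hGτ, show (m - 1) / m * -(1 / (m - 1)) = -(1 / m) by
          field_simp [show m - 1 ≠ 0 by linarith, show m ≠ 0 by linarith]]
        exact div_rpow_mul_rpow_neg_le hA hApos (div_nonneg (by linarith) (by linarith))
          (by positivity) hGt (hGavg τ hτ) hτ.1 hτ.2
    _ = ENNReal.ofReal (K * (t / (ε * p - 1 / m + 1))) := by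
        simp_rw [ENNReal.ofReal_mul hK]
        rw [lintegral_const_mul' _ _ ENNReal.ofReal_ne_top,
          lintegral_Ioc_div_rpow (neg_one_lt_mul_div_sub_one_div hm hε) ht]
    _ ≤ ENNReal.ofReal (m / (m - 1) * (1 - ε) * (A t / t) * G t ^ ((m - 1) / m)) :=
        ENNReal.ofReal_le_ofReal (div_rpow_mul_rpow_neg_mul_le hm hε hεm hAt ht hGlow)

theorem integral_bound_Hn_general (n : ℕ) (hn : 2 ≤ n) (A : ℝ → ℝ)
    (hApos : ∀ t > (0:ℝ), 0 < A t)
    (hconv : ConvNearZero A n)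
    (ε : ℝ) (hε0 : 0 < ε) (hε1 : ε < 1/n)
    (hratio : ∀ s t : ℝ, 0 < s → s ≤ t → A s / s ^ (1+ε) ≤ A t / t ^ (1+ε)) :
    ∀ t > (0:ℝ),
      (∫⁻ τ in Set.Ioc (0:ℝ) t,
          ENNReal.ofReal ((A τ / τ) ^ (((n:ℝ)-2)/((n:ℝ)-1)) *
            (Hn A n τ) ^ (-(1/((n:ℝ)-1))))) ≤
        ENNReal.ofReal (((n:ℝ)/((n:ℝ)-1)) * (1-ε) * (A t / t) * Hn A n t) := by
  intro t ht
  have hm : (2 : ℝ) ≤ n := by exact_mod_cast hn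
  have hεm : ε * n ≤ 1 := ((lt_div_iff₀ (by positivity)).1 hε1).le
  have hq : 0 ≤ 1 / ((n : ℝ) - 1) := div_nonneg zero_le_one (by linarith)
  have hmono : MonotoneOn (fun s => A s / s ^ (1 + ε)) (Ioi 0) :=
    fun s hs t _ hst => hratio s t hs hst
  have hanti := antitoneOn_ofReal_div_rpow
    (monotoneOn_div_self_of_monotoneOn_div_rpow hmono (fun s hs => (hApos s hs).le) hε0.le) hApos hq
  obtain ⟨δ, hδ, hδfin⟩ := hconv
  have hfin := lintegral_Ioc_lt_top_of_antitoneOn hanti hδ hδfin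
  refine lintegral_Ioc_div_rpow_mul_rpow_le hm hε0.le hεm hmono hApos
    (fun τ hτ => toReal_lintegral_Ioc_mul_div_le_of_antitoneOn hanti (hfin τ).ne hτ.1 hτ.2) ?_ ht
  have hGlow := ofReal_le_lintegral_Ioc_div_rpow hmono hApos hq
    (mul_one_div_sub_one_lt_one hm hεm) ht
  rwa [← ENNReal.ofReal_toReal (hfin t).ne,
    ENNReal.ofReal_le_ofReal_iff ENNReal.toReal_nonneg] at hGlow

theorem integral_bound_Hn (n : ℕ) (hn : 2 ≤ n) (A : ℝ → ℝ) (hA : IsYoung A)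
    (hApos : ∀ t > (0:ℝ), 0 < A t)
    (hconv : ConvNearZero A n)
    (ε : ℝ) (hε0 : 0 < ε) (hε1 : ε < 1/n)
    (hratio : ∀ s t : ℝ, 0 < s → s ≤ t → A s / s ^ (1+ε) ≤ A t / t ^ (1+ε)) :
    ∀ t > (0:ℝ),
      (∫⁻ τ in Set.Ioc (0:ℝ) t,
          ENNReal.ofReal ((A τ / τ) ^ (((n:ℝ)-2)/((n:ℝ)-1)) *
            (Hn A n τ) ^ (-(1/((n:ℝ)-1))))) ≤
        ENNReal.ofReal (((n:ℝ)/((n:ℝ)-1)) * (1-ε) * (A t / t) * Hn A n t) :=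
  integral_bound_Hn_general n hn A hApos hconv ε hε0 hε1 hratio
end

section
/- Let t₁ ∈ ℝ, let L : [t₁,∞) → [0,∞) be nonincreasing, let U ⊆ [t₁,∞) be a Lebesgue measurable set of finite measure, and set W = [t₁,∞) \ U and I_s = [s,∞) ∩ U for s ≥ t₁. Then for every k̄ > 1 there exists s₁ ≥ t₁ such that for all s ≥ s₁: ∫_{[ k̄ s, ∞) ∩ U} L(t) dt ≤ ∫_{[s,∞) ∩ W} L(t) dt, and consequently ∫_{k̄ s}^{∞} L(t) dt ≤ 2 ∫_{[s,∞) ∩ W} L(t) dt. -/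
open MeasureTheory Set Filter
open scoped ENNReal

theorem tail_integral_comparison
    (t₁ : ℝ) (L : ℝ → ℝ)
    (hLnonneg : ∀ t ≥ t₁, 0 ≤ L t)
    (hLanti : AntitoneOn L (Set.Ici t₁))
    (U : Set ℝ) (hUmeas : MeasurableSet U) (hUsub : U ⊆ Set.Ici t₁)
    (hUfin : volume U < ⊤) :
    ∀ k > (1:ℝ), ∃ s₁ ≥ t₁, ∀ s ≥ s₁,
      (∫⁻ t in Set.Ici (k * s) ∩ U, ENNReal.ofReal (L t)) ≤
        (∫⁻ t in Set.Ici s ∩ (Set.Ici t₁ \ U), ENNReal.ofReal (L t)) ∧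
      (∫⁻ t in Set.Ici (k * s), ENNReal.ofReal (L t)) ≤
        2 * ∫⁻ t in Set.Ici s ∩ (Set.Ici t₁ \ U), ENNReal.ofReal (L t) := by
  intro k hk
  set C := (volume U).toReal with hC
  have hCnn : 0 ≤ C := ENNReal.toReal_nonneg
  refine ⟨max (max t₁ 0) (2 * C / (k - 1)),
    le_trans (le_max_left _ _) (le_max_left _ _), ?_⟩
  intro s hs
  have hst₁ : t₁ ≤ s := le_trans (le_trans (le_max_left _ _) (le_max_left _ _)) hs
  have hs0 : (0:ℝ) ≤ s := le_trans (le_trans (le_max_right _ _) (le_max_left _ _)) hs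
  have hsk : s ≤ k * s := by nlinarith
  have hks₁ : t₁ ≤ k * s := le_trans hst₁ hsk
  have h2C : 2 * C ≤ (k - 1) * s := by
    have h := le_trans (le_max_right _ _) hs
    rw [div_le_iff₀ (by linarith)] at h
    linarith
  have hUC : volume U = ENNReal.ofReal C := (ENNReal.ofReal_toReal hUfin.ne).symm
  -- measure of Icc s (k*s) minus U is at least volume U
  set A : Set ℝ := Set.Icc s (k * s) \ U with hA
  have hAmeas : MeasurableSet A := measurableSet_Icc.diff hUmeas
  have hvolA : volume U ≤ volume A := by
    have hsplit : volume (Set.Icc s (k * s)) ≤ volume A + volume U := by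
      refine le_trans (measure_mono ?_) (measure_union_le _ _)
      intro t ht
      by_cases hU : t ∈ U
      · exact Or.inr hU
      · exact Or.inl ⟨ht, hU⟩
    have hIcc : volume (Set.Icc s (k * s)) = ENNReal.ofReal ((k - 1) * s) := by
      rw [Real.volume_Icc]; ring_nf
    have h2U : 2 * volume U ≤ volume A + volume U := by
      refine le_trans ?_ hsplit
      rw [hUC, hIcc,
        show (2 : ℝ≥0∞) * ENNReal.ofReal C = ENNReal.ofReal (2 * C) by
          rw [ENNReal.ofReal_mul (by norm_num)]; norm_num]
      exact ENNReal.ofReal_le_ofReal h2C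
    rw [two_mul] at h2U
    exact (ENNReal.add_le_add_iff_right hUfin.ne).mp h2U
  have hAsub : A ⊆ Set.Ici s ∩ (Set.Ici t₁ \ U) := by
    intro t ht
    exact ⟨ht.1.1, ⟨le_trans hst₁ ht.1.1, ht.2⟩⟩
  -- main chain
  have key : (∫⁻ t in Set.Ici (k * s) ∩ U, ENNReal.ofReal (L t)) ≤
      (∫⁻ t in Set.Ici s ∩ (Set.Ici t₁ \ U), ENNReal.ofReal (L t)) := by
    calc (∫⁻ t in Set.Ici (k * s) ∩ U, ENNReal.ofReal (L t))
        ≤ ∫⁻ _ in Set.Ici (k * s) ∩ U, ENNReal.ofReal (L (k * s)) := by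
          refine setLIntegral_mono measurable_const (fun t ht => ?_)
          exact ENNReal.ofReal_le_ofReal
            (hLanti hks₁ (le_trans hks₁ ht.1) ht.1)
      _ = ENNReal.ofReal (L (k * s)) * volume (Set.Ici (k * s) ∩ U) := by
          rw [setLIntegral_const]
      _ ≤ ENNReal.ofReal (L (k * s)) * volume U :=
          mul_le_mul_right (measure_mono inter_subset_right) _
      _ ≤ ENNReal.ofReal (L (k * s)) * volume A := mul_le_mul_right hvolA _
      _ = ∫⁻ _ in A, ENNReal.ofReal (L (k * s)) := by rw [setLIntegral_const]
      _ ≤ ∫⁻ t in A, ENNReal.ofReal (L t) := by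
          refine setLIntegral_mono' hAmeas (fun t ht => ?_)
          exact ENNReal.ofReal_le_ofReal
            (hLanti (le_trans hst₁ ht.1.1) hks₁ ht.1.2)
      _ ≤ ∫⁻ t in Set.Ici s ∩ (Set.Ici t₁ \ U), ENNReal.ofReal (L t) :=
          lintegral_mono_set hAsub
  refine ⟨key, ?_⟩
  have hsplit : (∫⁻ t in Set.Ici (k * s), ENNReal.ofReal (L t)) =
      (∫⁻ t in Set.Ici (k * s) ∩ U, ENNReal.ofReal (L t)) +
      (∫⁻ t in Set.Ici (k * s) \ U, ENNReal.ofReal (L t)) :=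
    (lintegral_inter_add_diff _ _ hUmeas).symm
  have hdiff : (∫⁻ t in Set.Ici (k * s) \ U, ENNReal.ofReal (L t)) ≤
      ∫⁻ t in Set.Ici s ∩ (Set.Ici t₁ \ U), ENNReal.ofReal (L t) := by
    refine lintegral_mono_set (fun t ht => ?_)
    exact ⟨le_trans hsk ht.1, ⟨le_trans hks₁ ht.1, ht.2⟩⟩
  rw [hsplit, two_mul]
  exact add_le_add key hdiff
end
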